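/- arXiv:2404.17706 — 5 statements merged into one kernel-verified Lean document; each statement's English description precedes it below -/
import Mathlib

section
/- Uniqueness of mild solutions on a common interval (second part of Theorem 2.1): If U and V are both mild solutions of the delayed evolution problem on [0, t₀] with the same history g̃, then U(t) = V(t) for every t ∈ [0, t₀]. -/
open MeasureTheory intervalIntegral

variable {𝓗 : Type*} [NormedAddCommGroup 𝓗] [InnerProductSpace ℝ 𝓗] [CompleteSpace 𝓗]

/-- `U` is a mild solution on `[0, T]` of the delayed evolution problem
`U'(t) = 𝓐 U(t) - k(t) 𝓑 U(t - τ(t)) + F(U(t))` with history `g` on `[-τ̄, 0]`. -/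
def IsMildSolution (S : ℝ → 𝓗 →L[ℝ] 𝓗) (τbar : ℝ) (τ : ℝ → ℝ) (B : 𝓗 →L[ℝ] 𝓗)
    (k : ℝ → ℝ) (F : 𝓗 → 𝓗) (g : ℝ → 𝓗) (T : ℝ) (U : ℝ → 𝓗) : Prop :=
  ContinuousOn U (Set.Icc (-τbar) T) ∧
  (∀ s ∈ Set.Icc (-τbar) (0 : ℝ), U s = g s) ∧
  ∀ t ∈ Set.Icc (0 : ℝ) T,
    U t = S t (g 0) + ∫ s in (0 : ℝ)..t, S (t - s) (F (U s) - k s • B (U (s - τ s)))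

/-!
If two mild solutions `U`, `V` agree on `[0, a]`, subtracting their variation-of-constants
formulas gives, for `t ≥ a`, `‖U t - V t‖ ≤ D ∫ₐᵗ M (L + ‖𝓑‖ |k|)`, where `D` bounds
`‖U - V‖` on `[0, t]` and `L` is a Lipschitz constant of `F` on a ball containing both
solutions; the delayed argument `s - τ s` only reaches back to where `U` and `V` agree or to the
common history. The weight is integrable, so its integral over any interval of some length `δ`
is at most `1/2`. Hence the maximum of `‖U - V‖` on `[0, a + δ]` is at most half of itself:
agreement propagates from `[0, a]` to `[0, a + δ]`, and in finitely many steps to `[0, t₀]`.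
-/

open Set Filter Topology
open scoped NNReal

section Gronwall

variable {E : Type*} [NormedAddCommGroup E]

theorem exists_pos_abs_integral_le {K : ℝ → ℝ} {c d ε : ℝ} (hK : IntegrableOn K (uIcc c d))
    (hε : 0 < ε) :
    ∃ δ > 0, ∀ a ∈ uIcc c d, ∀ t ∈ uIcc c d, |t - a| ≤ δ → |∫ s in a..t, K s| ≤ ε := by
  obtain ⟨δ, hδ, hP⟩ := Metric.uniformContinuousOn_iff.1
    (isCompact_uIcc.uniformContinuousOn_of_continuous
      (intervalIntegral.continuousOn_primitive_interval hK)) ε hε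
  have hKi : ∀ x ∈ uIcc c d, IntervalIntegrable K volume c x := fun x hx =>
    (hK.mono_set (uIcc_subset_uIcc left_mem_uIcc hx)).intervalIntegrable
  refine ⟨δ / 2, half_pos hδ, fun a ha t ht hat => ?_⟩
  rw [← intervalIntegral.integral_interval_sub_left (hKi t ht) (hKi a ha), ← Real.dist_eq]
  exact (hP t ht a ha (by rw [Real.dist_eq]; linarith)).le

theorem eqOn_Icc_of_eqOn_of_integral_le_half {U V : ℝ → E} {K : ℝ → ℝ} {a b : ℝ}
    (hU : ContinuousOn U (Icc 0 b)) (hV : ContinuousOn V (Icc 0 b)) (ha : 0 ≤ a) (hab : a ≤ b)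
    (hUV : EqOn U V (Icc 0 a)) (hK : ∀ t ∈ Icc a b, ∫ s in a..t, K s ≤ 1 / 2)
    (h : ∀ t D, t ∈ Ioc a b → (∀ s ∈ Icc 0 t, ‖U s - V s‖ ≤ D) →
      ‖U t - V t‖ ≤ D * ∫ s in a..t, K s) :
    EqOn U V (Icc 0 b) := by
  obtain ⟨x, hx, hmax⟩ :=
    isCompact_Icc.exists_isMaxOn (nonempty_Icc.2 (ha.trans hab)) (hU.sub hV).norm
  set D := ‖U x - V x‖
  have hle : ∀ s ∈ Icc 0 b, ‖U s - V s‖ ≤ D := hmax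
  have hhalf : ∀ s ∈ Icc 0 b, ‖U s - V s‖ ≤ D / 2 := by
    intro s hs
    rcases le_or_gt s a with hsa | has
    · rw [hUV ⟨hs.1, hsa⟩, sub_self, norm_zero]
      positivity
    calc ‖U s - V s‖ ≤ D * ∫ u in a..s, K u :=
          h s D ⟨has, hs.2⟩ fun u hu => hle u ⟨hu.1, hu.2.trans hs.2⟩
      _ ≤ D * (1 / 2) := by gcongr; exact hK s ⟨has.le, hs.2⟩
      _ = D / 2 := by ring
  have hD : D = 0 := by linarith [hhalf x hx, norm_nonneg (U x - V x)]
  intro s hs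
  exact sub_eq_zero.1 (norm_le_zero_iff.1 (hD ▸ hle s hs))

theorem eqOn_Icc_of_norm_sub_le_mul_integral {U V : ℝ → E} {K : ℝ → ℝ} {T : ℝ}
    (hK : IntegrableOn K (Icc 0 T)) (hU : ContinuousOn U (Icc 0 T))
    (hV : ContinuousOn V (Icc 0 T)) (h0 : U 0 = V 0)
    (h : ∀ a t D, 0 ≤ a → a ≤ t → t ≤ T → EqOn U V (Icc 0 a) →
      (∀ s ∈ Icc 0 t, ‖U s - V s‖ ≤ D) → ‖U t - V t‖ ≤ D * ∫ s in a..t, K s) :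
    EqOn U V (Icc 0 T) := by
  intro t ht
  have hT : 0 ≤ T := ht.1.trans ht.2
  obtain ⟨δ, hδ, hKδ⟩ := exists_pos_abs_integral_le (by rwa [uIcc_of_le hT]) one_half_pos
  rw [uIcc_of_le hT] at hKδ
  have hsteps : ∀ n : ℕ, EqOn U V (Icc 0 (min (n * δ) T)) := by
    intro n
    induction n with
    | zero =>
      intro s hs
      rw [le_antisymm (hs.2.trans (by simp [hT])) hs.1, h0]
    | succ n ih =>
      set a := min (n * δ) T
      set b := min ((n + 1 : ℕ) * δ) T
      have ha : 0 ≤ a := le_min (by positivity) hT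
      have hbT : b ≤ T := min_le_right _ _
      have hba : b ≤ a + δ :=
        calc b ≤ min (n * δ + δ) (T + δ) := min_le_min (by push_cast; linarith) (by linarith)
          _ = a + δ := min_add_add_right _ _ _
      refine eqOn_Icc_of_eqOn_of_integral_le_half (hU.mono (Icc_subset_Icc_right hbT))
        (hV.mono (Icc_subset_Icc_right hbT)) ha
        (min_le_min_right _ (by push_cast; linarith)) ih (fun s hs => ?_)
        (fun s D hs hD => h a s D ha hs.1.le (hs.2.trans hbT) ih hD)
      exact (le_abs_self _).trans (hKδ a ⟨ha, min_le_right _ _⟩ s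
        ⟨ha.trans hs.1, hs.2.trans hbT⟩ (abs_le.2 ⟨by linarith [hs.1], by linarith [hs.2]⟩))
  obtain ⟨n, hn⟩ := exists_nat_ge (T / δ)
  have hnT : min (n * δ) T = T := min_eq_right ((div_le_iff₀ hδ).1 hn)
  exact hsteps n (by rwa [hnT])

end Gronwall

section General

variable {E : Type*} [NormedAddCommGroup E] [NormedSpace ℝ E]

theorem ContinuousOn.clm_apply_of_norm_le {α G : Type*} [TopologicalSpace α]
    [NormedAddCommGroup G] [NormedSpace ℝ G] {A : α → E →L[ℝ] G} {f : α → E} {s : Set α} {C : ℝ}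
    (hA : ∀ x, ContinuousOn (fun a => A a x) s) (hC : ∀ a ∈ s, ‖A a‖ ≤ C)
    (hf : ContinuousOn f s) :
    ContinuousOn (fun a => A a (f a)) s := by
  intro a₀ ha₀
  have hsmall : Tendsto (fun a => A a (f a - f a₀)) (𝓝[s] a₀) (𝓝 0) := by
    refine squeeze_zero_norm' ?_
      (by simpa using ((hf a₀ ha₀).sub_const (f a₀)).norm.const_mul C)
    filter_upwards [self_mem_nhdsWithin] with a ha
    exact (A a).le_of_opNorm_le (hC a ha) _
  simpa [ContinuousWithinAt] using hsmall.add (hA (f a₀) a₀ ha₀)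

theorem intervalIntegrable_apply_sub_smul {S : ℝ → E →L[ℝ] E} {f h : ℝ → E} {k : ℝ → ℝ}
    {C t : ℝ} (hS : ∀ x, ContinuousOn (fun s => S s x) (Icc 0 t))
    (hSC : ∀ s ∈ Icc 0 t, ‖S s‖ ≤ C) (hf : ContinuousOn f (Icc 0 t))
    (hh : ContinuousOn h (Icc 0 t)) (hk : IntegrableOn k (Icc 0 t)) (ht : 0 ≤ t) :
    IntervalIntegrable (fun s => S (t - s) (f s - k s • h s)) volume 0 t := by
  have hrev : MapsTo (t - ·) (Icc 0 t) (Icc 0 t) := fun s hs =>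
    ⟨by linarith [hs.2], by linarith [hs.1]⟩
  have hcont : ∀ {u : ℝ → E}, ContinuousOn u (Icc 0 t) →
      ContinuousOn (fun s => S (t - s) (u s)) (Icc 0 t) := fun hu =>
    .clm_apply_of_norm_le (fun x => (hS x).comp (continuousOn_const.sub continuousOn_id) hrev)
      (fun s hs => hSC _ (hrev hs)) hu
  refine IntegrableOn.intervalIntegrable ?_
  simp only [uIcc_of_le ht, map_sub, map_smul]
  exact (hcont hf).integrableOn_Icc.sub (hk.smul_continuousOn (hcont hh) isCompact_Icc)

theorem norm_integral_le_mul_integral_of_eqOn_zero {f : ℝ → E} {K : ℝ → ℝ} {c a t D : ℝ}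
    (hca : c ≤ a) (hat : a ≤ t) (hf : IntervalIntegrable f volume c t)
    (hK : IntervalIntegrable K volume a t) (hf0 : EqOn f 0 (Icc c a))
    (hfK : ∀ s ∈ Ioc a t, ‖f s‖ ≤ D * K s) :
    ‖∫ s in c..t, f s‖ ≤ D * ∫ s in a..t, K s := by
  have hca' : ∫ s in c..a, f s = 0 := by
    rw [intervalIntegral.integral_congr (g := 0) (by rwa [uIcc_of_le hca])]
    simp
  have hmem : a ∈ uIcc c t := ⟨inf_le_left.trans hca, hat.trans le_sup_right⟩
  rw [← intervalIntegral.integral_add_adjacent_intervals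
      (hf.mono_set (uIcc_subset_uIcc left_mem_uIcc hmem))
      (hf.mono_set (uIcc_subset_uIcc hmem right_mem_uIcc)),
    hca', zero_add, ← intervalIntegral.integral_const_mul]
  exact intervalIntegral.norm_integral_le_of_norm_le hat (ae_of_all _ hfK) (hK.const_mul D)

theorem norm_apply_sub_smul_sub_le {A B : E →L[ℝ] E} {F : E → E} {x y x' y' : E} {c C L : ℝ}
    (hA : ‖A‖ ≤ C) (hF : ‖F x - F y‖ ≤ L * ‖x - y‖) :
    ‖A (F x - c • B x') - A (F y - c • B y')‖ ≤ C * (L * ‖x - y‖ + ‖c‖ * ‖B‖ * ‖x' - y'‖) := by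
  have hdiff : F x - c • B x' - (F y - c • B y') = (F x - F y) - c • B (x' - y') := by
    rw [map_sub, smul_sub]
    abel
  rw [← map_sub, hdiff]
  refine (A.le_of_opNorm_le hA _).trans
    (mul_le_mul_of_nonneg_left ?_ ((norm_nonneg A).trans hA))
  calc ‖F x - F y - c • B (x' - y')‖ ≤ ‖F x - F y‖ + ‖c‖ * ‖B (x' - y')‖ :=
        (norm_sub_le _ _).trans_eq (by rw [norm_smul])
    _ ≤ L * ‖x - y‖ + ‖c‖ * (‖B‖ * ‖x' - y'‖) := by gcongr; exact B.le_opNorm _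
    _ = L * ‖x - y‖ + ‖c‖ * ‖B‖ * ‖x' - y'‖ := by ring

end General

section Delay

variable {E : Type*} [NormedAddCommGroup E] [NormedSpace ℝ E]
  {S : ℝ → E →L[ℝ] E} {τbar : ℝ} {τ : ℝ → ℝ} {B : E →L[ℝ] E} {k : ℝ → ℝ} {F : E → E}
  {T C t : ℝ} {R : Set E}

theorem sub_delay_mem_Icc (hτ : ∀ s ∈ Icc 0 T, τ s ∈ Icc 0 τbar) {s : ℝ} (hs : s ∈ Icc 0 T) :
    s - τ s ∈ Icc (-τbar) s :=
  ⟨by linarith [hs.1, (hτ s hs).2], by linarith [(hτ s hs).1]⟩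

theorem intervalIntegrable_mild_integrand {U : ℝ → E}
    (hS : ∀ x, ContinuousOn (fun s => S s x) (Icc 0 T)) (hSC : ∀ s ∈ Icc 0 T, ‖S s‖ ≤ C)
    (hτc : ContinuousOn τ (Icc 0 T)) (hτ : ∀ s ∈ Icc 0 T, τ s ∈ Icc 0 τbar)
    (hk : IntegrableOn k (Icc 0 T)) (hF : ContinuousOn F R)
    (hU : ContinuousOn U (Icc (-τbar) T)) (hUR : MapsTo U (Icc (-τbar) T) R) (ht : t ∈ Icc 0 T) :
    IntervalIntegrable (fun s => S (t - s) (F (U s) - k s • B (U (s - τ s)))) volume 0 t := by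
  have hsub : Icc 0 t ⊆ Icc 0 T := Icc_subset_Icc_right ht.2
  have hτbar : -τbar ≤ 0 := by linarith [(hτ t ht).1, (hτ t ht).2]
  have hdelay : MapsTo (fun s => s - τ s) (Icc 0 t) (Icc (-τbar) T) := fun s hs =>
    have h := sub_delay_mem_Icc hτ (hsub hs)
    ⟨h.1, h.2.trans (hsub hs).2⟩
  have hUt : Icc 0 t ⊆ Icc (-τbar) T := Icc_subset_Icc hτbar ht.2
  exact intervalIntegrable_apply_sub_smul (fun x => (hS x).mono hsub)
    (fun s hs => hSC s (hsub hs))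
    (hF.comp (hU.mono hUt) (hUR.mono_left hUt))
    (B.continuous.comp_continuousOn (hU.comp (continuousOn_id.sub (hτc.mono hsub)) hdelay))
    (hk.mono_set hsub) ht.1

end Delay

namespace IsMildSolution

variable {E : Type*} [NormedAddCommGroup E] [InnerProductSpace ℝ E]
  {S : ℝ → E →L[ℝ] E} {τbar : ℝ} {τ : ℝ → ℝ} {B : E →L[ℝ] E} {k : ℝ → ℝ}
  {F : E → E} {g : ℝ → E} {T : ℝ} {U V : ℝ → E}

theorem eqOn_history (hU : IsMildSolution S τbar τ B k F g T U)
    (hV : IsMildSolution S τbar τ B k F g T V) : EqOn U V (Icc (-τbar) 0) := fun s hs =>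
  (hU.2.1 s hs).trans (hV.2.1 s hs).symm

theorem norm_sub_le_mul_integral {C : ℝ} {L : ℝ≥0} {R : Set E}
    (hU : IsMildSolution S τbar τ B k F g T U) (hV : IsMildSolution S τbar τ B k F g T V)
    (hS : ∀ x, ContinuousOn (fun s => S s x) (Icc 0 T)) (hSC : ∀ s ∈ Icc 0 T, ‖S s‖ ≤ C)
    (hτc : ContinuousOn τ (Icc 0 T)) (hτ : ∀ s ∈ Icc 0 T, τ s ∈ Icc 0 τbar)
    (hk : IntegrableOn k (Icc 0 T)) (hF : LipschitzOnWith L F R)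
    (hUR : MapsTo U (Icc (-τbar) T) R) (hVR : MapsTo V (Icc (-τbar) T) R)
    {a t D : ℝ} (ha : 0 ≤ a) (hat : a ≤ t) (htT : t ≤ T) (hUV : EqOn U V (Icc 0 a))
    (hD : ∀ s ∈ Icc 0 t, ‖U s - V s‖ ≤ D) :
    ‖U t - V t‖ ≤ D * ∫ s in a..t, C * (L + ‖B‖ * ‖k s‖) := by
  have ht : t ∈ Icc 0 T := ⟨ha.trans hat, htT⟩
  have hUVa : EqOn U V (Icc (-τbar) a) := fun s hs => by
    rcases le_total s 0 with hs0 | hs0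
    exacts [hU.eqOn_history hV ⟨hs.1, hs0⟩, hUV ⟨hs0, hs.2⟩]
  have hDt : ∀ s ∈ Icc (-τbar) t, ‖U s - V s‖ ≤ D := fun s hs => by
    rcases le_total s 0 with hs0 | hs0
    · rw [hU.eqOn_history hV ⟨hs.1, hs0⟩, sub_self, norm_zero]
      exact (norm_nonneg _).trans (hD t ⟨ht.1, le_rfl⟩)
    · exact hD s ⟨hs0, hs.2⟩
  have hUint :=
    intervalIntegrable_mild_integrand (B := B) hS hSC hτc hτ hk hF.continuousOn hU.1 hUR ht
  have hVint :=
    intervalIntegrable_mild_integrand (B := B) hS hSC hτc hτ hk hF.continuousOn hV.1 hVR ht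
  have hK : IntegrableOn (fun s => C * (L + ‖B‖ * ‖k s‖)) (Icc 0 T) :=
    ((integrableOn_const measure_Icc_lt_top.ne).add (hk.norm.const_mul _)).const_mul C
  have hC : 0 ≤ C := (norm_nonneg _).trans (hSC t ht)
  rw [hU.2.2 t ht, hV.2.2 t ht, add_sub_add_left_eq_sub, ← integral_sub hUint hVint]
  refine norm_integral_le_mul_integral_of_eqOn_zero ha hat (hUint.sub hVint)
    (hK.mono_set (by rw [uIcc_of_le hat]; exact Icc_subset_Icc ha htT)).intervalIntegrable
    (fun s hs => ?_) (fun s hs => ?_)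
  · have hsτ := sub_delay_mem_Icc hτ ⟨hs.1, hs.2.trans (hat.trans htT)⟩
    simp [hUV hs, hUVa ⟨hsτ.1, hsτ.2.trans hs.2⟩]
  · have hs' : s ∈ Icc 0 T := ⟨ha.trans hs.1.le, hs.2.trans htT⟩
    have hsτ := sub_delay_mem_Icc hτ hs'
    have hsI : s ∈ Icc (-τbar) T := ⟨hsτ.1.trans hsτ.2, hs'.2⟩
    calc _ ≤ C * (L * ‖U s - V s‖ + ‖k s‖ * ‖B‖ * ‖U (s - τ s) - V (s - τ s)‖) :=
          norm_apply_sub_smul_sub_le (hSC _ ⟨by linarith [hs.2], by linarith [hs'.1]⟩)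
            (hF.norm_sub_le (hUR hsI) (hVR hsI))
      _ ≤ C * (L * D + ‖k s‖ * ‖B‖ * D) := by
          gcongr
          exacts [hD s ⟨hs'.1, hs.2⟩, hDt _ ⟨hsτ.1, hsτ.2.trans hs.2⟩]
      _ = D * (C * (L + ‖B‖ * ‖k s‖)) := by ring

end IsMildSolution

theorem uniqueness_mild_solutions_general
    (S : ℝ → 𝓗 →L[ℝ] 𝓗) (M ω : ℝ) (τbar : ℝ) (τ : ℝ → ℝ) (B : 𝓗 →L[ℝ] 𝓗)
    (k : ℝ → ℝ) (F : 𝓗 → 𝓗) (L : ℝ → ℝ) (g : ℝ → 𝓗)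
    (hM : 1 ≤ M) (hω : 0 < ω)
    (hScont : ∀ x : 𝓗, ContinuousOn (fun t => S t x) (Set.Ici (0 : ℝ)))
    (hSbound : ∀ t : ℝ, 0 ≤ t → ‖S t‖ ≤ M * Real.exp (-ω * t))
    (hτbar : 0 < τbar)
    (hτcont : ContinuousOn τ (Set.Ici (0 : ℝ)))
    (hτ : ∀ t : ℝ, 0 ≤ t → 0 ≤ τ t ∧ τ t ≤ τbar)
    (hk : LocallyIntegrableOn k (Set.Ici (-τbar)))
    (hL : ∀ r : ℝ, 0 < r → 0 < L r ∧
      ∀ U V : 𝓗, ‖U‖ ≤ r → ‖V‖ ≤ r → ‖F U - F V‖ ≤ L r * ‖U - V‖)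
    (t₀ : ℝ) (U V : ℝ → 𝓗)
    (hU : IsMildSolution S τbar τ B k F g t₀ U)
    (hV : IsMildSolution S τbar τ B k F g t₀ V) :
    ∀ t ∈ Set.Icc (0 : ℝ) t₀, U t = V t := by
  have hSM : ∀ t ∈ Icc 0 t₀, ‖S t‖ ≤ M := fun t ht =>
    (hSbound t ht.1).trans
      (mul_le_of_le_one_right (by linarith) (Real.exp_le_one_iff.2 (by nlinarith [ht.1])))
  obtain ⟨r, hr, hUVr⟩ := ((isCompact_Icc.image_of_continuousOn hU.1).isBounded.union
    (isCompact_Icc.image_of_continuousOn hV.1).isBounded).subset_closedBall_lt 0 0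
  obtain ⟨hLr, hLip⟩ := hL r hr
  have hF : LipschitzOnWith ⟨L r, hLr.le⟩ F (Metric.closedBall 0 r) :=
    .of_dist_le_mul fun x hx y hy => by
      rw [dist_eq_norm, dist_eq_norm]
      exact hLip x y (mem_closedBall_zero_iff.1 hx) (mem_closedBall_zero_iff.1 hy)
  have hk' : IntegrableOn k (Icc 0 t₀) :=
    hk.integrableOn_compact_subset
      (Icc_subset_Ici_self.trans (Ici_subset_Ici.2 (by linarith))) isCompact_Icc
  have hsub : Icc 0 t₀ ⊆ Icc (-τbar) t₀ := Icc_subset_Icc_left (by linarith)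
  refine eqOn_Icc_of_norm_sub_le_mul_integral (K := fun s => M * (L r + ‖B‖ * ‖k s‖))
    (((integrableOn_const measure_Icc_lt_top.ne).add (hk'.norm.const_mul _)).const_mul M)
    (hU.1.mono hsub) (hV.1.mono hsub) (hU.eqOn_history hV ⟨by linarith, le_rfl⟩)
    fun a t D ha hat htT hUV hD => ?_
  exact hU.norm_sub_le_mul_integral hV (fun x => (hScont x).mono Icc_subset_Ici_self) hSM
    (hτcont.mono Icc_subset_Ici_self) (fun s hs => hτ s hs.1) hk' hF
    (fun s hs => hUVr (.inl ⟨s, hs, rfl⟩)) (fun s hs => hUVr (.inr ⟨s, hs, rfl⟩))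
    ha hat htT hUV hD

/-- **Uniqueness of mild solutions on a common interval (second part of Theorem 2.1).**
If `U` and `V` are both mild solutions on `[0, t₀]` with the same history `g`, then
`U = V` on `[0, t₀]`. -/
theorem uniqueness_mild_solutions
    (S : ℝ → 𝓗 →L[ℝ] 𝓗) (M ω : ℝ) (τbar : ℝ) (τ : ℝ → ℝ) (B : 𝓗 →L[ℝ] 𝓗) (b : ℝ)
    (k : ℝ → ℝ) (F : 𝓗 → 𝓗) (L : ℝ → ℝ) (g : ℝ → 𝓗)
    (hM : 1 ≤ M) (hω : 0 < ω)
    (hS0 : S 0 = ContinuousLinearMap.id ℝ 𝓗)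
    (hSsemi : ∀ t s : ℝ, 0 ≤ t → 0 ≤ s → S (t + s) = (S t).comp (S s))
    (hScont : ∀ x : 𝓗, ContinuousOn (fun t => S t x) (Set.Ici (0 : ℝ)))
    (hSbound : ∀ t : ℝ, 0 ≤ t → ‖S t‖ ≤ M * Real.exp (-ω * t))
    (hτbar : 0 < τbar)
    (hτcont : ContinuousOn τ (Set.Ici (0 : ℝ)))
    (hτ : ∀ t : ℝ, 0 ≤ t → 0 ≤ τ t ∧ τ t ≤ τbar)
    (hb : 0 < b) (hB : ‖B‖ ≤ b ^ 2)
    (hk : LocallyIntegrableOn k (Set.Ici (-τbar)))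
    (hF0 : F 0 = 0)
    (hL : ∀ r : ℝ, 0 < r → 0 < L r ∧
      ∀ U V : 𝓗, ‖U‖ ≤ r → ‖V‖ ≤ r → ‖F U - F V‖ ≤ L r * ‖U - V‖)
    (hg : ContinuousOn g (Set.Icc (-τbar) 0))
    (t₀ : ℝ) (ht₀ : 0 < t₀) (U V : ℝ → 𝓗)
    (hU : IsMildSolution S τbar τ B k F g t₀ U)
    (hV : IsMildSolution S τbar τ B k F g t₀ V) :
    ∀ t ∈ Set.Icc (0 : ℝ) t₀, U t = V t :=
  uniqueness_mild_solutions_general S M ω τbar τ B k F L g hM hω hScont hSbound hτbar hτcont hτ hk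
    hL t₀ U V hU hV
end

section
/- Exponential decay of bounded mild solutions (Theorem 3.1): Assume in addition that there is K > 0 with ∫_{t−τ̄}^{t} |k(s)| ds < K for all t ≥ 0, and that there exist γ ∈ ℝ and ω′ ∈ [0, ω) such that b² M e^{ωτ̄} ∫₀ᵗ |k(s)| ds ≤ γ + ω′ t for all t ≥ 0. Let U be a mild solution on [0, T] with ‖U(t)‖ ≤ C for all t ∈ [0, T], for some C > 0 with L(C) < (ω − ω′)/M. Then for all t ∈ [0, T]: ‖U(t)‖ ≤ M e^{γ} ( ‖U₀‖ + e^{ωτ̄} K b² · max_{r ∈ [−τ̄,0]} e^{ωr}‖g̃(r)‖ ) · e^{−(ω − ω′ − M L(C)) t}. -/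
/-!
With `v t = exp (ω t) ‖U t‖`, the mild formula and the bounds on `S`, `F` and `𝓑` give
`v t ≤ M ‖U₀‖ + c G K + ∫₀ᵗ (M L(C) + c |k s|) w s ds`, where `w` is the running supremum of `v`,
`c = b² M e^{ωτ̄}` and `G` is the weighted sup of the history: a delayed argument can only reach
into the history while `s < τ̄`, and this costs at most `∫₀^τ̄ |k| < K`. The right-hand side is
nondecreasing in `t`, so `w` obeys the same inequality, and Gronwall's inequality bounds `w t` by
`(M ‖U₀‖ + c G K) exp (M L(C) t + c ∫₀ᵗ |k|)`; the growth condition turns the exponent into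
`γ + (ω' + M L(C)) t`.
-/

open MeasureTheory intervalIntegral

variable {𝓗 : Type*} [NormedAddCommGroup 𝓗] [InnerProductSpace ℝ 𝓗] [CompleteSpace 𝓗]

open Set Filter Real

open scoped NNReal

theorem IntervalIntegrable.mul_monotoneOn {f g : ℝ → ℝ} {a b : ℝ} (hab : a ≤ b)
    (hf : IntervalIntegrable f volume a b) (hg : MonotoneOn g (Icc a b)) :
    IntervalIntegrable (fun x => f x * g x) volume a b := by
  rw [intervalIntegrable_iff_integrableOn_Icc_of_le hab] at hf ⊢
  exact hf.mul_of_top_left (hg.memLp_top (isLeast_Icc hab) (isGreatest_Icc hab) measurableSet_Icc)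

theorem integral_indicator_Iio_le {f : ℝ → ℝ} {t c : ℝ} (ht : 0 ≤ t) (hc : 0 ≤ c)
    (hf : IntervalIntegrable f volume 0 c) (hf0 : ∀ s, 0 ≤ f s) :
    ∫ s in 0..t, (Iio c).indicator f s ≤ ∫ s in 0..c, f s := by
  rw [integral_of_le ht, integral_of_le hc, setIntegral_indicator measurableSet_Iio]
  exact setIntegral_mono_set hf.1 (Eventually.of_forall hf0)
    (Eventually.of_forall fun s hs => ⟨hs.1.1, hs.2.le⟩)

theorem LipschitzOnWith.comp_absolutelyContinuousOnInterval {X Y : Type*} [PseudoMetricSpace X]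
    [PseudoMetricSpace Y] {g : X → Y} {K : ℝ≥0} {s : Set X} {f : ℝ → X} {a b : ℝ}
    (hg : LipschitzOnWith K g s) (hf : AbsolutelyContinuousOnInterval f a b)
    (hfs : MapsTo f (uIcc a b) s) : AbsolutelyContinuousOnInterval (g ∘ f) a b := by
  have hKf := Filter.Tendsto.const_mul (K : ℝ) hf
  rw [mul_zero] at hKf
  refine squeeze_zero' (Eventually.of_forall fun _ => Finset.sum_nonneg fun _ _ => dist_nonneg)
    ?_ hKf
  filter_upwards [mem_inf_of_right (mem_principal_self _)] with E hE
  rw [Finset.mul_sum]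
  gcongr with i hi
  exact hg.dist_le_mul _ (hfs (hE.1 i hi).1) _ (hfs (hE.1 i hi).2)

theorem LocallyLipschitz.comp_absolutelyContinuousOnInterval {E Y : Type*}
    [SeminormedAddCommGroup E] [PseudoMetricSpace Y] {g : E → Y} {f : ℝ → E} {a b : ℝ}
    (hg : LocallyLipschitz g) (hf : AbsolutelyContinuousOnInterval f a b) :
    AbsolutelyContinuousOnInterval (g ∘ f) a b := by
  obtain ⟨K, hK⟩ := hg.locallyLipschitzOn.exists_lipschitzOnWith_of_compact
    (isCompact_uIcc.image_of_continuousOn hf.continuousOn)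
  exact hK.comp_absolutelyContinuousOnInterval hf (mapsTo_image f _)

/-- Gronwall's inequality with an integrable kernel `h ≥ 0`: the right-hand side `Ψ` has
`Ψ' = h φ ≤ h Ψ` a.e., so the absolutely continuous function `Ψ e^{-∫ h}` is nonincreasing. -/
theorem le_mul_exp_integral_of_le_add_integral_mul {h φ : ℝ → ℝ} {a t : ℝ} (ht : 0 ≤ t)
    (hh : IntervalIntegrable h volume 0 t)
    (hhφ : IntervalIntegrable (fun s => h s * φ s) volume 0 t)
    (hh0 : ∀ s ∈ Icc 0 t, 0 ≤ h s)
    (hφ : ∀ s ∈ Icc 0 t, φ s ≤ a + ∫ u in 0..s, h u * φ u) :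
    φ t ≤ a * exp (∫ s in 0..t, h s) := by
  set H : ℝ → ℝ := fun x => ∫ u in 0..x, h u
  set Ψ : ℝ → ℝ := fun x => a + ∫ u in 0..x, h u * φ u
  have h0 : (0 : ℝ) ∈ uIcc 0 t := left_mem_uIcc
  have hΨ : AbsolutelyContinuousOnInterval Ψ 0 t :=
    (LipschitzWith.const a).lipschitzOnWith.absolutelyContinuousOnInterval.fun_add
      (hhφ.absolutelyContinuousOnInterval_intervalIntegral h0)
  have hE : AbsolutelyContinuousOnInterval (fun x => Ψ x * exp (-H x)) 0 t :=
    hΨ.fun_mul (contDiff_exp.locallyLipschitz.comp_absolutelyContinuousOnInterval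
      (hh.absolutelyContinuousOnInterval_intervalIntegral h0).fun_neg)
  have hE_deriv : deriv (fun x => Ψ x * exp (-H x)) ≤ᵐ[volume.restrict (Icc 0 t)] 0 := by
    rw [← uIcc_of_le ht]
    filter_upwards [ae_restrict_mem measurableSet_uIcc,
      ae_restrict_of_ae hh.ae_hasDerivAt_integral,
      ae_restrict_of_ae hhφ.ae_hasDerivAt_integral] with x hx hH hΦ
    have hd : HasDerivAt (fun x => Ψ x * exp (-H x))
        (h x * φ x * exp (-H x) + Ψ x * (exp (-H x) * -h x)) x :=
      ((hΦ hx 0 h0).const_add a).mul (hH hx 0 h0).neg.exp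
    rw [uIcc_of_le ht] at hx
    have := mul_nonneg (hh0 x hx) (exp_pos (-H x)).le
    rw [hd.deriv, Pi.zero_apply]
    nlinarith [hφ x hx]
  have hΨt : Ψ t * exp (-H t) ≤ a := by
    have := integral_mono_ae_restrict (g := fun _ => 0) ht hE.intervalIntegrable_deriv
      intervalIntegrable_const hE_deriv
    rw [hE.integral_deriv_eq_sub, intervalIntegral.integral_zero] at this
    simpa [Ψ, H] using this
  calc φ t ≤ Ψ t := hφ t ⟨ht, le_rfl⟩
    _ ≤ a * exp (H t) := by
      rwa [exp_neg, ← div_eq_mul_inv, div_le_iff₀ (exp_pos _)] at hΨt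

noncomputable def runningSup (v : ℝ → ℝ) (t : ℝ) : ℝ := sSup (v '' Icc 0 t)

section runningSup

variable {v : ℝ → ℝ} {T t r c : ℝ}

theorem le_runningSup (hv : BddAbove (v '' Icc 0 T)) (ht : t ≤ T) (hr : r ∈ Icc 0 t) :
    v r ≤ runningSup v t :=
  le_csSup (hv.mono (image_mono (Icc_subset_Icc_right ht))) (mem_image_of_mem v hr)

theorem runningSup_le (ht : 0 ≤ t) (h : ∀ r ∈ Icc 0 t, v r ≤ c) : runningSup v t ≤ c :=
  csSup_le ((nonempty_Icc.2 ht).image v) (forall_mem_image.2 h)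

theorem monotoneOn_runningSup (hv : BddAbove (v '' Icc 0 T)) :
    MonotoneOn (runningSup v) (Icc 0 T) := fun _ hs _ ht hst =>
  runningSup_le hs.1 fun _ hr => le_runningSup hv ht.2 ⟨hr.1, hr.2.trans hst⟩

theorem le_mul_exp_integral_of_le_add_integral_mul_runningSup {h : ℝ → ℝ} {a : ℝ}
    (hv : BddAbove (v '' Icc 0 T)) (hv0 : ∀ s ∈ Icc 0 T, 0 ≤ v s)
    (hh : IntervalIntegrable h volume 0 T) (hh0 : ∀ s ∈ Icc 0 T, 0 ≤ h s)
    (hvh : ∀ s ∈ Icc 0 T, v s ≤ a + ∫ u in 0..s, h u * runningSup v u) (ht : t ∈ Icc 0 T) :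
    v t ≤ a * exp (∫ s in 0..t, h s) := by
  have hsub : Icc 0 t ⊆ Icc 0 T := Icc_subset_Icc_right ht.2
  have hht : IntervalIntegrable h volume 0 t :=
    hh.mono_set (by simpa [uIcc_of_le, ht.1, ht.1.trans ht.2] using hsub)
  have hhw : IntervalIntegrable (fun s => h s * runningSup v s) volume 0 t :=
    hht.mul_monotoneOn ht.1 ((monotoneOn_runningSup hv).mono hsub)
  have hhw0 : ∀ s ∈ Icc 0 t, 0 ≤ h s * runningSup v s := fun s hs =>
    mul_nonneg (hh0 s (hsub hs)) ((hv0 0 (left_mem_Icc.2 (ht.1.trans ht.2))).trans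
      (le_runningSup hv (hs.2.trans ht.2) (left_mem_Icc.2 hs.1)))
  refine (le_runningSup hv ht.2 (right_mem_Icc.2 ht.1)).trans ?_
  refine le_mul_exp_integral_of_le_add_integral_mul ht.1 hht hhw
    (fun s hs => hh0 s (hsub hs)) fun s hs => runningSup_le hs.1 fun r hr => ?_
  refine (hvh r (hsub ⟨hr.1, hr.2.trans hs.2⟩)).trans ((add_le_add_iff_left a).2 ?_)
  refine integral_mono_interval le_rfl hr.1 hr.2 ?_
    (hhw.mono_set (uIcc_subset_uIcc_left (mem_uIcc_of_le hs.1 hs.2)))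
  filter_upwards [ae_restrict_mem measurableSet_Ioc] with u hu
  exact hhw0 u ⟨hu.1.le, hu.2.trans hs.2⟩

end runningSup

theorem exp_mul_norm_le_of_eq_add_integral {E : Type*} [NormedAddCommGroup E] [NormedSpace ℝ E]
    {S : ℝ → E →L[ℝ] E} {M ω t : ℝ} {x : E} {f : ℝ → E} {q : ℝ → ℝ}
    (hS : ∀ r, 0 ≤ r → ‖S r‖ ≤ M * exp (-ω * r)) (ht : 0 ≤ t)
    (hq : IntervalIntegrable q volume 0 t)
    (hfq : ∀ s ∈ Icc 0 t, M * exp (ω * s) * ‖f s‖ ≤ q s) :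
    exp (ω * t) * ‖S t x + ∫ s in 0..t, S (t - s) (f s)‖ ≤ M * ‖x‖ + ∫ s in 0..t, q s := by
  have hSx : ‖S t x‖ ≤ exp (-(ω * t)) * (M * ‖x‖) :=
    calc ‖S t x‖ ≤ ‖S t‖ * ‖x‖ := (S t).le_opNorm x
      _ ≤ M * exp (-ω * t) * ‖x‖ := by gcongr; exact hS t ht
      _ = exp (-(ω * t)) * (M * ‖x‖) := by ring_nf
  have hint : ‖∫ s in 0..t, S (t - s) (f s)‖ ≤ exp (-(ω * t)) * ∫ s in 0..t, q s := by
    rw [← intervalIntegral.integral_const_mul]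
    refine norm_integral_le_of_norm_le ht (Eventually.of_forall fun s hs => ?_) (hq.const_mul _)
    calc ‖S (t - s) (f s)‖ ≤ ‖S (t - s)‖ * ‖f s‖ := (S (t - s)).le_opNorm _
      _ ≤ M * exp (-ω * (t - s)) * ‖f s‖ := by gcongr; exact hS _ (sub_nonneg.2 hs.2)
      _ = exp (-(ω * t)) * (M * exp (ω * s) * ‖f s‖) := by
        rw [show -ω * (t - s) = ω * s + -(ω * t) by ring, exp_add]; ring
      _ ≤ exp (-(ω * t)) * q s := by gcongr; exact hfq s ⟨hs.1.le, hs.2⟩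
  calc exp (ω * t) * ‖S t x + ∫ s in 0..t, S (t - s) (f s)‖
      ≤ exp (ω * t) * (exp (-(ω * t)) * (M * ‖x‖) + exp (-(ω * t)) * ∫ s in 0..t, q s) := by
        gcongr; exact (norm_add_le _ _).trans (add_le_add hSx hint)
    _ = M * ‖x‖ + ∫ s in 0..t, q s := by
        rw [← mul_add, ← mul_assoc, ← exp_add, add_neg_cancel, exp_zero, one_mul]

/-- A delayed time `s - σ` lies in the history only if `s < τbar`; this is what the indicator
records. -/
theorem exp_mul_norm_delayed_le {E : Type*} [NormedAddCommGroup E] {U g : ℝ → E}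
    {ω τbar T G s σ : ℝ} (hω : 0 ≤ ω) (hUg : ∀ r ∈ Icc (-τbar) 0, U r = g r)
    (hG : ∀ r ∈ Icc (-τbar) 0, exp (ω * r) * ‖g r‖ ≤ G) (hG0 : 0 ≤ G)
    (hv : BddAbove ((fun r => exp (ω * r) * ‖U r‖) '' Icc 0 T)) (hs : s ∈ Icc 0 T)
    (hσ : σ ∈ Icc 0 τbar) :
    exp (ω * s) * ‖U (s - σ)‖ ≤ exp (ω * τbar) *
      (runningSup (fun r => exp (ω * r) * ‖U r‖) s + (Iio τbar).indicator (fun _ => G) s) := by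
  set v : ℝ → ℝ := fun r => exp (ω * r) * ‖U r‖
  have hshift : exp (ω * s) * ‖U (s - σ)‖ = exp (ω * σ) * (exp (ω * (s - σ)) * ‖U (s - σ)‖) := by
    rw [← mul_assoc, ← exp_add]; ring_nf
  have hστ : exp (ω * σ) ≤ exp (ω * τbar) := exp_le_exp.2 (mul_le_mul_of_nonneg_left hσ.2 hω)
  have hw0 : 0 ≤ runningSup v s :=
    (by positivity : 0 ≤ v 0).trans (le_runningSup hv hs.2 (left_mem_Icc.2 hs.1))
  rw [hshift]
  rcases lt_or_ge (s - σ) 0 with hpast | hpresent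
  · have hmem : s - σ ∈ Icc (-τbar) 0 := ⟨by linarith [hs.1, hσ.2], hpast.le⟩
    rw [hUg _ hmem, indicator_of_mem (show s ∈ Iio τbar by simp; linarith [hσ.2])]
    calc _ ≤ exp (ω * τbar) * G := mul_le_mul hστ (hG _ hmem) (by positivity) (exp_pos _).le
      _ ≤ _ := by gcongr; exact le_add_of_nonneg_left hw0
  · have hvw : v (s - σ) ≤ runningSup v s := le_runningSup hv hs.2 ⟨hpresent, by linarith [hσ.1]⟩
    calc _ ≤ exp (ω * τbar) * runningSup v s := mul_le_mul hστ hvw (by positivity) (exp_pos _).le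
      _ ≤ _ := by gcongr; exact le_add_of_nonneg_right (indicator_nonneg (fun _ _ => hG0) s)

theorem exp_mul_norm_le_add_integral_mul_runningSup {E : Type*} [NormedAddCommGroup E]
    [NormedSpace ℝ E] {S : ℝ → E →L[ℝ] E} {B : E →L[ℝ] E} {F : E → E} {U g : ℝ → E}
    {τ k : ℝ → ℝ} {M ω τbar b Lip T G K t : ℝ} (hM : 0 ≤ M) (hω : 0 ≤ ω) (hLip : 0 ≤ Lip)
    (hS : ∀ r, 0 ≤ r → ‖S r‖ ≤ M * exp (-ω * r)) (hτ : ∀ s, 0 ≤ s → 0 ≤ τ s ∧ τ s ≤ τbar)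
    (hB : ‖B‖ ≤ b ^ 2) (hkT : IntervalIntegrable k volume 0 T)
    (hkτ : IntervalIntegrable k volume 0 τbar) (hkK : ∫ s in 0..τbar, |k s| ≤ K)
    (hF : ∀ s ∈ Icc 0 T, ‖F (U s)‖ ≤ Lip * ‖U s‖) (hUg : ∀ r ∈ Icc (-τbar) 0, U r = g r)
    (hG : ∀ r ∈ Icc (-τbar) 0, exp (ω * r) * ‖g r‖ ≤ G) (hG0 : 0 ≤ G)
    (hv : BddAbove ((fun r => exp (ω * r) * ‖U r‖) '' Icc 0 T))
    (hU : U t = S t (g 0) + ∫ s in 0..t, S (t - s) (F (U s) - k s • B (U (s - τ s))))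
    (ht : t ∈ Icc 0 T) :
    exp (ω * t) * ‖U t‖ ≤ M * ‖g 0‖ + b ^ 2 * M * exp (ω * τbar) * G * K +
      ∫ s in 0..t, (M * Lip + b ^ 2 * M * exp (ω * τbar) * |k s|) *
        runningSup (fun r => exp (ω * r) * ‖U r‖) s := by
  have hτbar : 0 ≤ τbar := (hτ 0 le_rfl).1.trans (hτ 0 le_rfl).2
  set c := b ^ 2 * M * exp (ω * τbar)
  set w := runningSup (fun r => exp (ω * r) * ‖U r‖)
  have hsub : Icc 0 t ⊆ Icc 0 T := Icc_subset_Icc_right ht.2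
  have hkt : IntervalIntegrable k volume 0 t :=
    hkT.mono_set (by simpa [uIcc_of_le, ht.1, ht.1.trans ht.2] using hsub)
  have hhw : IntervalIntegrable (fun s => (M * Lip + c * |k s|) * w s) volume 0 t :=
    (intervalIntegrable_const.add (hkt.abs.const_mul c)).mul_monotoneOn ht.1
      ((monotoneOn_runningSup hv).mono hsub)
  have hpast : IntervalIntegrable (fun s => (Iio τbar).indicator (fun r => |k r|) s) volume 0 t :=
    intervalIntegrable_iff.2 ((intervalIntegrable_iff.1 hkt.abs).indicator measurableSet_Iio)
  rw [hU]
  refine (exp_mul_norm_le_of_eq_add_integral hS ht.1 (hhw.add (hpast.const_mul (c * G)))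
    fun s hs => ?_).trans ?_
  · have hsT := hsub hs
    have hUs : exp (ω * s) * ‖U s‖ ≤ w s := le_runningSup hv hsT.2 (right_mem_Icc.2 hs.1)
    have hdelay := exp_mul_norm_delayed_le hω hUg hG hG0 hv hsT (hτ s hs.1)
    have hnorm :
        ‖F (U s) - k s • B (U (s - τ s))‖ ≤ Lip * ‖U s‖ + |k s| * (b ^ 2 * ‖U (s - τ s)‖) :=
      calc ‖F (U s) - k s • B (U (s - τ s))‖ ≤ ‖F (U s)‖ + ‖k s • B (U (s - τ s))‖ :=
            norm_sub_le _ _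
        _ ≤ Lip * ‖U s‖ + |k s| * (b ^ 2 * ‖U (s - τ s)‖) := by
            rw [norm_smul, Real.norm_eq_abs]
            gcongr
            · exact hF s hsT
            · exact (B.le_opNorm _).trans (by gcongr)
    calc M * exp (ω * s) * ‖F (U s) - k s • B (U (s - τ s))‖
        ≤ M * exp (ω * s) * (Lip * ‖U s‖ + |k s| * (b ^ 2 * ‖U (s - τ s)‖)) := by gcongr
      _ = M * Lip * (exp (ω * s) * ‖U s‖) + b ^ 2 * M * |k s| * (exp (ω * s) * ‖U (s - τ s)‖) := by
          ring
      _ ≤ M * Lip * w s + b ^ 2 * M * |k s| *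
            (exp (ω * τbar) * (w s + (Iio τbar).indicator (fun _ => G) s)) := by gcongr
      _ = (M * Lip + c * |k s|) * w s + c * G * (Iio τbar).indicator (fun r => |k r|) s := by
          by_cases hsτ : s ∈ Iio τbar
          · simp only [indicator_of_mem hsτ, c]; ring
          · simp only [indicator_of_notMem hsτ, c]; ring
  · rw [integral_add hhw (hpast.const_mul _), intervalIntegral.integral_const_mul]
    have := (integral_indicator_Iio_le ht.1 hτbar hkτ.abs fun _ => abs_nonneg _).trans hkK
    have : 0 ≤ c * G := by positivity
    nlinarith

theorem exponential_decay_bounded_mild_solutions_general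
    (S : ℝ → 𝓗 →L[ℝ] 𝓗) (M ω : ℝ) (τbar : ℝ) (τ : ℝ → ℝ) (B : 𝓗 →L[ℝ] 𝓗) (b : ℝ)
    (k : ℝ → ℝ) (F : 𝓗 → 𝓗) (L : ℝ → ℝ) (g : ℝ → 𝓗)
    (hM : 1 ≤ M) (hω : 0 < ω)
    (hSbound : ∀ t : ℝ, 0 ≤ t → ‖S t‖ ≤ M * Real.exp (-ω * t))
    (hτbar : 0 < τbar)
    (hτ : ∀ t : ℝ, 0 ≤ t → 0 ≤ τ t ∧ τ t ≤ τbar)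
    (hB : ‖B‖ ≤ b ^ 2)
    (hk : LocallyIntegrableOn k (Set.Ici (-τbar)))
    (hF0 : F 0 = 0)
    (hL : ∀ r : ℝ, 0 < r → 0 < L r ∧
      ∀ U V : 𝓗, ‖U‖ ≤ r → ‖V‖ ≤ r → ‖F U - F V‖ ≤ L r * ‖U - V‖)
    (hg : ContinuousOn g (Set.Icc (-τbar) 0))
    (K : ℝ) (hK : 0 < K)
    (hkK : ∀ t : ℝ, 0 ≤ t → ∫ s in (t - τbar)..t, |k s| < K)
    (γ ω' : ℝ)
    (hγ : ∀ t : ℝ, 0 ≤ t →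
      b ^ 2 * M * Real.exp (ω * τbar) * ∫ s in (0 : ℝ)..t, |k s| ≤ γ + ω' * t)
    (T : ℝ) (U : ℝ → 𝓗)
    (hU : IsMildSolution S τbar τ B k F g T U)
    (C : ℝ) (hC : 0 < C)
    (hUbound : ∀ t ∈ Set.Icc (0 : ℝ) T, ‖U t‖ ≤ C) :
    ∀ t ∈ Set.Icc (0 : ℝ) T,
      ‖U t‖ ≤ M * Real.exp γ *
          (‖g 0‖ + Real.exp (ω * τbar) * K * b ^ 2 *
            sSup ((fun r => Real.exp (ω * r) * ‖g r‖) '' Set.Icc (-τbar) (0 : ℝ))) *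
          Real.exp (-(ω - ω' - M * L C) * t) := by
  intro t ht
  obtain ⟨-, hUg, hUmild⟩ := hU
  obtain ⟨hLC, hLip⟩ := hL C hC
  set G := sSup ((fun r => exp (ω * r) * ‖g r‖) '' Icc (-τbar) 0)
  set c := b ^ 2 * M * exp (ω * τbar)
  have hG : ∀ r ∈ Icc (-τbar) 0, exp (ω * r) * ‖g r‖ ≤ G := fun r hr =>
    le_csSup (isCompact_Icc.image_of_continuousOn (by fun_prop)).bddAbove (mem_image_of_mem _ hr)
  have hG0 : 0 ≤ G :=
    (mul_nonneg (exp_pos _).le (norm_nonneg _)).trans (hG 0 ⟨by linarith, le_rfl⟩)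
  have hv : BddAbove ((fun r => exp (ω * r) * ‖U r‖) '' Icc 0 T) :=
    ⟨exp (ω * T) * C, forall_mem_image.2 fun r hr => by gcongr; exacts [hr.2, hUbound r hr]⟩
  have hFU : ∀ s ∈ Icc 0 T, ‖F (U s)‖ ≤ L C * ‖U s‖ := fun s hs => by
    simpa [hF0] using hLip (U s) 0 (hUbound s hs) (by simpa using hC.le)
  have hkI : ∀ x, 0 ≤ x → IntervalIntegrable k volume 0 x := fun x hx =>
    (hk.integrableOn_compact_subset (fun y hy => by simp [uIcc_of_le hx] at hy ⊢; linarith [hy.1])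
      isCompact_uIcc).intervalIntegrable
  have hvt := le_mul_exp_integral_of_le_add_integral_mul_runningSup hv (fun _ _ => by positivity)
    (intervalIntegrable_const.add ((hkI T (ht.1.trans ht.2)).abs.const_mul c))
    (fun _ _ => by positivity)
    (fun s hs => exp_mul_norm_le_add_integral_mul_runningSup (by linarith) hω.le hLC.le hSbound hτ
      hB (hkI T (ht.1.trans ht.2)) (hkI τbar hτbar.le) (by simpa using (hkK τbar hτbar.le).le)
      hFU hUg hG hG0 hv (hUmild s hs) hs) ht
  have hexponent : ∫ s in 0..t, (M * L C + c * |k s|) ≤ γ + (ω' + M * L C) * t := by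
    rw [integral_add intervalIntegrable_const ((hkI t ht.1).abs.const_mul c),
      intervalIntegral.integral_const, intervalIntegral.integral_const_mul, sub_zero, smul_eq_mul]
    linarith [hγ t ht.1]
  have hexp : exp (-(ω * t)) * exp (γ + (ω' + M * L C) * t) =
      exp γ * exp (-(ω - ω' - M * L C) * t) := by
    rw [← exp_add, ← exp_add]; ring_nf
  calc ‖U t‖ = exp (-(ω * t)) * (exp (ω * t) * ‖U t‖) := by
        rw [← mul_assoc, ← exp_add, neg_add_cancel, exp_zero, one_mul]
    _ ≤ exp (-(ω * t)) * ((M * ‖g 0‖ + c * G * K) * exp (γ + (ω' + M * L C) * t)) := by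
        exact mul_le_mul_of_nonneg_left (hvt.trans (by gcongr)) (exp_pos _).le
    _ = _ := by linear_combination (M * ‖g 0‖ + c * G * K) * hexp

/-- **Exponential decay of bounded mild solutions (Theorem 3.1).** Under the uniform bound
`∫_{t-τ̄}^t |k| < K` and the growth condition `b² M e^{ωτ̄} ∫₀ᵗ |k| ≤ γ + ω' t`, any mild
solution on `[0, T]` that is bounded by a constant `C` with `L(C) < (ω - ω')/M` satisfies
the exponential decay estimate. -/
theorem exponential_decay_bounded_mild_solutions
    (S : ℝ → 𝓗 →L[ℝ] 𝓗) (M ω : ℝ) (τbar : ℝ) (τ : ℝ → ℝ) (B : 𝓗 →L[ℝ] 𝓗) (b : ℝ)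
    (k : ℝ → ℝ) (F : 𝓗 → 𝓗) (L : ℝ → ℝ) (g : ℝ → 𝓗)
    (hM : 1 ≤ M) (hω : 0 < ω)
    (hS0 : S 0 = ContinuousLinearMap.id ℝ 𝓗)
    (hSsemi : ∀ t s : ℝ, 0 ≤ t → 0 ≤ s → S (t + s) = (S t).comp (S s))
    (hScont : ∀ x : 𝓗, ContinuousOn (fun t => S t x) (Set.Ici (0 : ℝ)))
    (hSbound : ∀ t : ℝ, 0 ≤ t → ‖S t‖ ≤ M * Real.exp (-ω * t))
    (hτbar : 0 < τbar)
    (hτcont : ContinuousOn τ (Set.Ici (0 : ℝ)))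
    (hτ : ∀ t : ℝ, 0 ≤ t → 0 ≤ τ t ∧ τ t ≤ τbar)
    (hb : 0 < b) (hB : ‖B‖ ≤ b ^ 2)
    (hk : LocallyIntegrableOn k (Set.Ici (-τbar)))
    (hF0 : F 0 = 0)
    (hL : ∀ r : ℝ, 0 < r → 0 < L r ∧
      ∀ U V : 𝓗, ‖U‖ ≤ r → ‖V‖ ≤ r → ‖F U - F V‖ ≤ L r * ‖U - V‖)
    (hg : ContinuousOn g (Set.Icc (-τbar) 0))
    (K : ℝ) (hK : 0 < K)
    (hkK : ∀ t : ℝ, 0 ≤ t → ∫ s in (t - τbar)..t, |k s| < K)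
    (γ ω' : ℝ) (hω'0 : 0 ≤ ω') (hω'ω : ω' < ω)
    (hγ : ∀ t : ℝ, 0 ≤ t →
      b ^ 2 * M * Real.exp (ω * τbar) * ∫ s in (0 : ℝ)..t, |k s| ≤ γ + ω' * t)
    (T : ℝ) (hT : 0 < T) (U : ℝ → 𝓗)
    (hU : IsMildSolution S τbar τ B k F g T U)
    (C : ℝ) (hC : 0 < C) (hLC : L C < (ω - ω') / M)
    (hUbound : ∀ t ∈ Set.Icc (0 : ℝ) T, ‖U t‖ ≤ C) :
    ∀ t ∈ Set.Icc (0 : ℝ) T,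
      ‖U t‖ ≤ M * Real.exp γ *
          (‖g 0‖ + Real.exp (ω * τbar) * K * b ^ 2 *
            sSup ((fun r => Real.exp (ω * r) * ‖g r‖) '' Set.Icc (-τbar) (0 : ℝ))) *
          Real.exp (-(ω - ω' - M * L C) * t) :=
  exponential_decay_bounded_mild_solutions_general S M ω τbar τ B b k F L g hM hω hSbound hτbar hτ
    hB hk hF0 hL hg K hK hkK γ ω' hγ T U hU C hC hUbound
end

section
/- Running-maximum Gronwall estimate (core of Lemma 2.2): Let c₀ ≥ 0, let E : [0,∞) → ℝ be differentiable, and let g : [0,∞) → ℝ be nonnegative and locally integrable. If E′(t) ≤ g(t) · max{ c₀, sup_{s ∈ [0,t]} E(s) } for all t ≥ 0, then E(t) ≤ max{c₀, E(0)} · exp( ∫₀ᵗ g(s) ds ) for all t ≥ 0. -/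
/-!
Let `M t = max c₀ (sup_{[0,t]} E)`. It is monotone, and integrating `E' ≤ g M` from `0` gives
`M t ≤ M₀ + ∫₀ᵗ g M` with `M₀ = max c₀ (E 0)`. For a monotone `u`, such an integral inequality
already yields the Gronwall bound: `v = C + ∫ g u` satisfies `v z * (1 - ∫ₓᶻ g) ≤ v x` since
`u ≤ u z ≤ v z` on `[x, z]`, and a continuous induction turns this local estimate into
`v b ≤ C * exp (K ∫ₐᵇ g)` for every `K > 1`.
-/

open MeasureTheory intervalIntegral Set Filter Topology Real

lemma MeasureTheory.IntegrableOn.mul_monotoneOn {g u : ℝ → ℝ} {s : Set ℝ} (hs : IsCompact s)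
    (hg : IntegrableOn g s) (hu : MonotoneOn u s) : IntegrableOn (fun x => g x * u x) s :=
  hg.mul_of_top_left (hu.memLp_isCompact hs)

-- `1 / (1 - Δ) ≤ 1 + K Δ ≤ exp (K Δ)` as soon as `0 ≤ Δ ≤ 1 - 1 / K`.
lemma le_mul_exp_mul_of_mul_one_sub_le {w B K Δ : ℝ} (hB : 0 ≤ B) (hK : 1 < K) (hΔ0 : 0 ≤ Δ)
    (hΔ : Δ < 1 - K⁻¹) (hw : w * (1 - Δ) ≤ B) : w ≤ B * exp (K * Δ) := by
  have hK0 : 0 < K := zero_lt_one.trans hK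
  have hKΔ : K * Δ ≤ K - 1 := by
    have : K * (1 - K⁻¹) = K - 1 := by field_simp
    nlinarith
  have hprod : 1 ≤ (1 + K * Δ) * (1 - Δ) := by nlinarith
  have hwB : w ≤ B * (1 + K * Δ) := by
    refine le_of_mul_le_mul_right ?_ (by linarith [inv_pos.2 hK0] : 0 < 1 - Δ)
    calc w * (1 - Δ) ≤ B := hw
      _ ≤ B * ((1 + K * Δ) * (1 - Δ)) := le_mul_of_one_le_right hB hprod
      _ = B * (1 + K * Δ) * (1 - Δ) := by ring
  exact hwB.trans (by gcongr; linarith [add_one_le_exp (K * Δ)])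

/- Continuous induction: continuity of `G` provides steps `[x, z]` with `G z - G x` small enough
for the previous lemma, and the slack `K > 1` absorbs the gap between `1 / (1 - Δ)` and `exp Δ`. -/
lemma le_mul_exp_mul_sub_of_mul_one_sub_le {v G : ℝ → ℝ} {a b K : ℝ} (hab : a ≤ b) (hK : 1 < K)
    (hv : ContinuousOn v (Icc a b)) (hG : ContinuousOn G (Icc a b))
    (hGm : MonotoneOn G (Icc a b)) (hva : 0 ≤ v a)
    (hstep : ∀ x ∈ Icc a b, ∀ z ∈ Icc a b, x ≤ z → v z * (1 - (G z - G x)) ≤ v x) :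
    v b ≤ v a * exp (K * (G b - G a)) := by
  set B : ℝ → ℝ := fun t => v a * exp (K * (G t - G a))
  have hclosed : IsClosed ({t | v t ≤ B t} ∩ Icc a b) := by
    rw [inter_comm]
    exact isClosed_Icc.isClosed_le hv (continuousOn_const.mul
      (continuous_exp.comp_continuousOn (continuousOn_const.mul (hG.sub continuousOn_const))))
  refine hclosed.Icc_subset_of_forall_exists_gt (by simp [B]) ?_ ⟨hab, le_rfl⟩
  rintro x ⟨hxB, hax, hxb⟩ y hxy
  have hxc : x < min y b := lt_min hxy hxb
  have hsub : Ioc x (min y b) ⊆ Icc a b := fun t ht =>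
    ⟨hax.trans ht.1.le, ht.2.trans (min_le_right _ _)⟩
  have hnear : ∀ᶠ t in 𝓝[Ioc x (min y b)] x, G t < G x + (1 - K⁻¹) :=
    ((hG x ⟨hax, hxb.le⟩).mono hsub).eventually_lt_const
      (by linarith [inv_lt_one_of_one_lt₀ hK])
  have := left_nhdsWithin_Ioc_neBot hxc
  obtain ⟨z, hzG, hz⟩ := (hnear.and self_mem_nhdsWithin).exists
  have hxI : x ∈ Icc a b := ⟨hax, hxb.le⟩
  have hzI : z ∈ Icc a b := hsub hz
  have hΔ0 : 0 ≤ G z - G x := sub_nonneg.2 (hGm hxI hzI hz.1.le)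
  refine ⟨z, ?_, hz.1, hz.2.trans (min_le_left _ _)⟩
  calc v z ≤ B x * exp (K * (G z - G x)) :=
        le_mul_exp_mul_of_mul_one_sub_le (mul_nonneg hva (exp_pos _).le) hK hΔ0 (by linarith)
          ((hstep x hxI z hzI hz.1.le).trans hxB)
    _ = B z := by
        simp only [B, mul_assoc, ← exp_add]
        ring_nf

lemma le_mul_exp_sub_of_mul_one_sub_le {v G : ℝ → ℝ} {a b : ℝ} (hab : a ≤ b)
    (hv : ContinuousOn v (Icc a b)) (hG : ContinuousOn G (Icc a b))
    (hGm : MonotoneOn G (Icc a b)) (hva : 0 ≤ v a)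
    (hstep : ∀ x ∈ Icc a b, ∀ z ∈ Icc a b, x ≤ z → v z * (1 - (G z - G x)) ≤ v x) :
    v b ≤ v a * exp (G b - G a) := by
  have hlim : Tendsto (fun K => v a * exp (K * (G b - G a))) (𝓝[>] 1)
      (𝓝 (v a * exp (G b - G a))) := by
    have hcont : Continuous fun K => v a * exp (K * (G b - G a)) := by fun_prop
    simpa using (hcont.tendsto 1).mono_left nhdsWithin_le_nhds
  exact ge_of_tendsto hlim (eventually_nhdsWithin_of_forall fun K hK =>
    le_mul_exp_mul_sub_of_mul_one_sub_le hab hK hv hG hGm hva hstep)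

theorem MonotoneOn.le_mul_exp_integral_of_le_add_integral {u g : ℝ → ℝ} {a b C : ℝ}
    (hab : a ≤ b) (hC : 0 ≤ C) (hu : MonotoneOn u (Icc a b)) (hg : IntegrableOn g (Icc a b))
    (hg0 : ∀ t ∈ Icc a b, 0 ≤ g t) (hle : ∀ t ∈ Icc a b, u t ≤ C + ∫ s in a..t, g s * u s) :
    u b ≤ C * exp (∫ s in a..b, g s) := by
  have hgu : IntegrableOn (fun s => g s * u s) (Icc a b) := hg.mul_monotoneOn isCompact_Icc hu
  have hint : ∀ {f : ℝ → ℝ}, IntegrableOn f (Icc a b) →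
      ∀ x ∈ Icc a b, ∀ z ∈ Icc a b, IntervalIntegrable f volume x z :=
    fun hf x hx z hz => (hf.mono_set (uIcc_subset_Icc hx hz)).intervalIntegrable
  have hprim : ∀ {f : ℝ → ℝ}, IntegrableOn f (Icc a b) →
      ContinuousOn (fun t => ∫ s in a..t, f s) (Icc a b) := fun hf => by
    simpa only [uIcc_of_le hab] using
      continuousOn_primitive_interval (a := a) (b := b) (by rwa [uIcc_of_le hab])
  set v : ℝ → ℝ := fun t => C + ∫ s in a..t, g s * u s
  set G : ℝ → ℝ := fun t => ∫ s in a..t, g s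
  have hstep : ∀ x ∈ Icc a b, ∀ z ∈ Icc a b, x ≤ z → v z * (1 - (G z - G x)) ≤ v x := by
    intro x hx z hz hxz
    have hva := hint hgu a (left_mem_Icc.2 hab)
    have hga := hint hg a (left_mem_Icc.2 hab)
    have hdiff : v z - v x = ∫ s in x..z, g s * u s := by
      simp only [v, add_sub_add_left_eq_sub]
      exact integral_interval_sub_left (hva z hz) (hva x hx)
    have hG : G z - G x = ∫ s in x..z, g s := integral_interval_sub_left (hga z hz) (hga x hx)
    have hsub : Icc x z ⊆ Icc a b := Icc_subset_Icc hx.1 hz.2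
    have hΔ : 0 ≤ G z - G x := hG ▸ integral_nonneg hxz fun s hs => hg0 s (hsub hs)
    have hbound : ∫ s in x..z, g s * u s ≤ (G z - G x) * u z := by
      rw [hG, ← intervalIntegral.integral_mul_const]
      refine integral_mono_on hxz (hint hgu x hx z hz) ((hint hg x hx z hz).mul_const _) ?_
      exact fun s hs => mul_le_mul_of_nonneg_left (hu (hsub hs) hz hs.2) (hg0 s (hsub hs))
    nlinarith [hle z hz]
  calc u b ≤ v b := hle b (right_mem_Icc.2 hab)
    _ ≤ v a * exp (G b - G a) := by
      refine le_mul_exp_sub_of_mul_one_sub_le hab (continuousOn_const.add (hprim hgu))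
        (hprim hg) ?_ (by simpa [v] using hC) hstep
      exact fun x hx y hy hxy => integral_mono_interval le_rfl hx.1 hxy
        ((ae_restrict_mem measurableSet_Ioc).mono fun s hs => hg0 s ⟨hs.1.le, hs.2.trans hy.2⟩)
        (hint hg a (left_mem_Icc.2 hab) y hy)
    _ = C * exp (∫ s in a..b, g s) := by simp [v, G]

noncomputable def runningMax (c₀ : ℝ) (E : ℝ → ℝ) (t : ℝ) : ℝ :=
  max c₀ (sSup (E '' Icc 0 t))

section runningMax

variable {c₀ : ℝ} {E : ℝ → ℝ} {s t : ℝ}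

lemma le_runningMax (hE : ContinuousOn E (Ici 0)) (hs : 0 ≤ s) (hst : s ≤ t) :
    E s ≤ runningMax c₀ E t :=
  (le_csSup (isCompact_Icc.image_of_continuousOn (hE.mono Icc_subset_Ici_self)).bddAbove
    (mem_image_of_mem E ⟨hs, hst⟩)).trans (le_max_right _ _)

lemma runningMax_le {B : ℝ} (ht : 0 ≤ t) (hc₀ : c₀ ≤ B) (hE : ∀ s ∈ Icc 0 t, E s ≤ B) :
    runningMax c₀ E t ≤ B :=
  max_le hc₀ (csSup_le ((nonempty_Icc.2 ht).image E) (forall_mem_image.2 hE))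

lemma runningMax_monotoneOn (hE : ContinuousOn E (Ici 0)) :
    MonotoneOn (runningMax c₀ E) (Ici 0) := fun _ hs _ _ hst =>
  runningMax_le hs (le_max_left _ _) fun _ hr => le_runningMax hE hr.1 (hr.2.trans hst)

lemma runningMax_le_max_add_integral {E' φ : ℝ → ℝ} (ht : 0 ≤ t)
    (hE : ∀ s ∈ Icc 0 t, HasDerivAt E (E' s) s) (hφ : IntegrableOn φ (Icc 0 t))
    (hφ0 : ∀ s ∈ Icc 0 t, 0 ≤ φ s) (hE'φ : ∀ s ∈ Ioo 0 t, E' s ≤ φ s) :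
    runningMax c₀ E t ≤ max c₀ (E 0) + ∫ s in 0..t, φ s := by
  have hprim : ∀ r ∈ Icc 0 t, ∫ s in 0..r, φ s ≤ ∫ s in 0..t, φ s := fun r hr =>
    integral_mono_interval le_rfl hr.1 hr.2
      ((ae_restrict_mem measurableSet_Ioc).mono fun s hs => hφ0 s ⟨hs.1.le, hs.2⟩)
      ((intervalIntegrable_iff_integrableOn_Icc_of_le ht).2 hφ)
  refine runningMax_le ht ?_ fun r hr => ?_
  · have := hprim 0 (left_mem_Icc.2 ht)
    rw [integral_same] at this
    linarith [le_max_left c₀ (E 0)]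
  · have hFTC : E r - E 0 ≤ ∫ s in 0..r, φ s :=
      sub_le_integral_of_hasDeriv_right_of_le hr.1
        (fun s hs => (hE s ⟨hs.1, hs.2.trans hr.2⟩).continuousAt.continuousWithinAt)
        (fun s hs => (hE s ⟨hs.1.le, hs.2.le.trans hr.2⟩).hasDerivWithinAt)
        (hφ.mono_set (Icc_subset_Icc_right hr.2))
        fun s hs => hE'φ s ⟨hs.1, hs.2.trans_le hr.2⟩
    linarith [hprim r hr, le_max_right c₀ (E 0)]

end runningMax

/-- **Running-maximum Gronwall estimate (core of Lemma 2.2).** If `E` is differentiable on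
`[0,∞)` with `E′(t) ≤ g(t) · max {c₀, sup_{s∈[0,t]} E(s)}` for a nonnegative locally
integrable `g`, then `E(t) ≤ max {c₀, E(0)} · exp(∫₀ᵗ g)` for all `t ≥ 0`. -/
theorem running_maximum_gronwall
    (c₀ : ℝ) (hc₀ : 0 ≤ c₀)
    (E E' g : ℝ → ℝ)
    (hE : ∀ t : ℝ, 0 ≤ t → HasDerivAt E (E' t) t)
    (hgnonneg : ∀ t : ℝ, 0 ≤ t → 0 ≤ g t)
    (hgint : LocallyIntegrableOn g (Set.Ici (0 : ℝ)))
    (hineq : ∀ t : ℝ, 0 ≤ t →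
      E' t ≤ g t * max c₀ (sSup (E '' Set.Icc (0 : ℝ) t))) :
    ∀ t : ℝ, 0 ≤ t →
      E t ≤ max c₀ (E 0) * Real.exp (∫ s in (0 : ℝ)..t, g s) := by
  intro T hT
  have hEc : ContinuousOn E (Ici 0) := fun t ht => (hE t ht).continuousAt.continuousWithinAt
  have hM : MonotoneOn (runningMax c₀ E) (Icc 0 T) :=
    (runningMax_monotoneOn hEc).mono Icc_subset_Ici_self
  have hg : IntegrableOn g (Icc 0 T) :=
    hgint.integrableOn_compact_subset Icc_subset_Ici_self isCompact_Icc
  have hgM := hg.mul_monotoneOn isCompact_Icc hM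
  have hbound : ∀ t ∈ Icc 0 T, runningMax c₀ E t ≤
      max c₀ (E 0) + ∫ s in 0..t, g s * runningMax c₀ E s := fun t ht =>
    runningMax_le_max_add_integral ht.1 (fun s hs => hE s hs.1)
      (hgM.mono_set (Icc_subset_Icc_right ht.2))
      (fun s hs => mul_nonneg (hgnonneg s hs.1) (hc₀.trans (le_max_left _ _)))
      fun s hs => hineq s hs.1.le
  calc E T ≤ runningMax c₀ E T := le_runningMax hEc hT le_rfl
    _ ≤ max c₀ (E 0) * Real.exp (∫ s in (0 : ℝ)..T, g s) :=
      hM.le_mul_exp_integral_of_le_add_integral hT (hc₀.trans (le_max_left _ _)) hg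
        (fun t ht => hgnonneg t ht.1) hbound
end

section
/- Sup-Gronwall integral inequality (core of the proof of Theorem 3.1): Let T > 0, A₀ ≥ 0, let w : [0,T] → ℝ be continuous and nonnegative, and let c : [0,T] → ℝ be nonnegative and integrable. If w(t) ≤ A₀ + ∫₀ᵗ c(s) · ( sup_{r ∈ [0,s]} w(r) ) ds for all t ∈ [0,T], then w(t) ≤ A₀ · exp( ∫₀ᵗ c(s) ds ) for all t ∈ [0,T]. -/
open MeasureTheory intervalIntegral Set

/-! The running supremum `W s = sup_{[0,s]} w` is dominated by `B · exp(∫₀ˢ c)` as long as `w` is,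
because the exponential factor is nondecreasing. Feeding this into the hypothesis and using
`∫₀ᵗ c · exp(∫₀ˢ c) ds ≤ exp(∫₀ᵗ c) - 1` gives `w ≤ A₀ + B (exp(∫₀ᵗ c) - 1)`, which is strictly
below `B · exp(∫₀ᵗ c)` whenever `B > A₀`. So `w` can never reach `B · exp(∫₀ᵗ c)` for the first
time, and letting `B ↓ A₀` gives the claim. -/

lemma monotoneOn_primitive_of_nonneg {c : ℝ → ℝ} {a b : ℝ} (hc : IntegrableOn c (Icc a b))
    (hc₀ : ∀ x ∈ Icc a b, 0 ≤ c x) :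
    MonotoneOn (fun x => ∫ t in a..x, c t) (Icc a b) := by
  intro x hx y hy hxy
  refine integral_mono_interval le_rfl hx.1 hxy ?_ (hc.mono_set ?_).intervalIntegrable
  · filter_upwards [ae_restrict_mem measurableSet_Ioc] with t ht
    exact hc₀ t ⟨ht.1.le, ht.2.trans hy.2⟩
  · rw [uIcc_of_le (hx.1.trans hxy)]
    exact Icc_subset_Icc le_rfl hy.2

lemma continuousOn_exp_primitive {c : ℝ → ℝ} {a b : ℝ} (hab : a ≤ b)
    (hc : IntegrableOn c (Icc a b)) :
    ContinuousOn (fun x => Real.exp (∫ t in a..x, c t)) (Icc a b) :=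
  Real.continuous_exp.comp_continuousOn
    (uIcc_of_le hab ▸ continuousOn_primitive_interval (uIcc_of_le hab ▸ hc))

lemma integral_mul_exp_primitive_le {c : ℝ → ℝ} {a b : ℝ} (hab : a ≤ b)
    (hc : IntegrableOn c (Icc a b)) (hc₀ : ∀ x ∈ Icc a b, 0 ≤ c x) :
    ∫ x in a..b, c x * Real.exp (∫ t in a..x, c t) ≤ Real.exp (∫ x in a..b, c x) - 1 := by
  set F : ℝ → ℝ := fun x => Real.exp (∫ t in a..x, c t)
  have hF_mono : MonotoneOn F (uIcc a b) := by
    rw [uIcc_of_le hab]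
    exact Real.exp_monotone.comp_monotoneOn (monotoneOn_primitive_of_nonneg hc hc₀)
  have hc_int : IntervalIntegrable c volume a b := (uIcc_of_le hab ▸ hc).intervalIntegrable
  -- Lebesgue differentiation: `F' = c · F` almost everywhere on `[a, b]`.
  have hF_deriv : ∫ x in a..b, c x * F x = ∫ x in a..b, deriv F x := by
    refine integral_congr_ae ?_
    filter_upwards [hc_int.ae_hasDerivAt_integral] with x hx hx_mem
    rw [(hx (uIoc_subset_uIcc hx_mem) a left_mem_uIcc).exp.deriv, mul_comm]
  have hFab : F a ≤ F b := hF_mono left_mem_uIcc right_mem_uIcc hab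
  have := hF_mono.intervalIntegral_deriv_mem_uIcc
  rw [uIcc_of_le (sub_nonneg.2 hFab)] at this
  simpa [F, hF_deriv] using this.2

lemma lt_on_Icc_of_lt_on_Ico_imp_lt {f g : ℝ → ℝ} {a b : ℝ} (hf : ContinuousOn f (Icc a b))
    (hg : ContinuousOn g (Icc a b))
    (step : ∀ τ ∈ Icc a b, (∀ s ∈ Ico a τ, f s < g s) → f τ < g τ) :
    ∀ t ∈ Icc a b, f t < g t := by
  by_contra! hcross
  set K := Icc a b ∩ (fun x => (g x, f x)) ⁻¹' {p | p.1 ≤ p.2}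
  have hK : IsCompact K := isCompact_Icc.of_isClosed_subset
    ((hg.prodMk hf).preimage_isClosed_of_isClosed isClosed_Icc isClosed_le_prod)
    inter_subset_left
  obtain ⟨t, ht, hgf⟩ := hcross
  obtain ⟨τ, ⟨hτ, hτ_le⟩, hτ_least⟩ := hK.exists_isLeast ⟨t, ht, hgf⟩
  refine (step τ hτ fun s hs => ?_).not_ge hτ_le
  by_contra! hs_le
  exact hs.2.not_ge (hτ_least ⟨⟨hs.1, hs.2.le.trans hτ.2⟩, hs_le⟩)

lemma sup_gronwall_lt_of_lt_on_Ico {T A₀ : ℝ} {w c : ℝ → ℝ} (hA₀ : 0 ≤ A₀)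
    (hwnonneg : ∀ t ∈ Icc (0 : ℝ) T, 0 ≤ w t)
    (hcnonneg : ∀ s ∈ Icc (0 : ℝ) T, 0 ≤ c s)
    (hcint : IntegrableOn c (Icc (0 : ℝ) T))
    (hineq : ∀ t ∈ Icc (0 : ℝ) T,
      w t ≤ A₀ + ∫ s in (0 : ℝ)..t, c s * sSup (w '' Icc (0 : ℝ) s))
    {B : ℝ} (hB : A₀ < B) {τ : ℝ} (hτ : τ ∈ Icc (0 : ℝ) T)
    (hlt : ∀ s ∈ Ico 0 τ, w s < B * Real.exp (∫ r in (0 : ℝ)..s, c r)) :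
    w τ < B * Real.exp (∫ r in (0 : ℝ)..τ, c r) := by
  set E : ℝ → ℝ := fun s => Real.exp (∫ r in (0 : ℝ)..s, c r)
  have hB₀ : 0 ≤ B := hA₀.trans hB.le
  have hsub : Icc 0 τ ⊆ Icc 0 T := Icc_subset_Icc le_rfl hτ.2
  have hE_mono : MonotoneOn E (Icc 0 τ) :=
    Real.exp_monotone.comp_monotoneOn
      ((monotoneOn_primitive_of_nonneg hcint hcnonneg).mono hsub)
  have hsup_le : ∀ s ∈ Ico 0 τ, sSup (w '' Icc 0 s) ≤ B * E s := by
    intro s hs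
    refine Real.sSup_le ?_ (mul_nonneg hB₀ (Real.exp_nonneg _))
    rintro _ ⟨r, hr, rfl⟩
    have hrs : E r ≤ E s :=
      hE_mono ⟨hr.1, hr.2.trans hs.2.le⟩ (Ico_subset_Icc_self hs) hr.2
    exact (hlt r ⟨hr.1, hr.2.trans_lt hs.2⟩).le.trans (by gcongr)
  have hcE_int : IntegrableOn (fun s => c s * (B * E s)) (Ioo 0 τ) :=
    ((hcint.mono_set hsub).mul_continuousOn
      (continuousOn_const.mul (continuousOn_exp_primitive (hτ.1.trans hτ.2) hcint |>.mono hsub))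
      isCompact_Icc).mono_set Ioo_subset_Icc_self
  have hint_le : ∫ s in (0 : ℝ)..τ, c s * sSup (w '' Icc 0 s)
      ≤ ∫ s in (0 : ℝ)..τ, c s * (B * E s) := by
    simp only [integral_of_le hτ.1, integral_Ioc_eq_integral_Ioo]
    refine integral_mono_of_nonneg ?_ hcE_int ?_ <;>
      filter_upwards [ae_restrict_mem measurableSet_Ioo] with s hs
    · exact mul_nonneg (hcnonneg s (hsub (Ioo_subset_Icc_self hs)))
        (Real.sSup_nonneg (by rintro _ ⟨r, hr, rfl⟩; exact hwnonneg r ⟨hr.1, hr.2.trans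
          (hs.2.le.trans hτ.2)⟩))
    · exact mul_le_mul_of_nonneg_left (hsup_le s (Ioo_subset_Ico_self hs))
        (hcnonneg s (hsub (Ioo_subset_Icc_self hs)))
  calc w τ ≤ A₀ + ∫ s in (0 : ℝ)..τ, c s * sSup (w '' Icc 0 s) := hineq τ hτ
    _ ≤ A₀ + B * ∫ s in (0 : ℝ)..τ, c s * E s := by
      simp only [mul_left_comm (c _) B, intervalIntegral.integral_const_mul] at hint_le
      linarith
    _ ≤ A₀ + B * (E τ - 1) := by
      have := integral_mul_exp_primitive_le hτ.1 (hcint.mono_set hsub)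
        fun s hs => hcnonneg s (hsub hs)
      gcongr
    _ < B * E τ := by linarith

theorem sup_gronwall_integral_general
    (T : ℝ)
    (A₀ : ℝ) (hA₀ : 0 ≤ A₀)
    (w c : ℝ → ℝ)
    (hwcont : ContinuousOn w (Set.Icc (0 : ℝ) T))
    (hwnonneg : ∀ t ∈ Set.Icc (0 : ℝ) T, 0 ≤ w t)
    (hcnonneg : ∀ s ∈ Set.Icc (0 : ℝ) T, 0 ≤ c s)
    (hcint : IntegrableOn c (Set.Icc (0 : ℝ) T))
    (hineq : ∀ t ∈ Set.Icc (0 : ℝ) T,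
      w t ≤ A₀ + ∫ s in (0 : ℝ)..t, c s * sSup (w '' Set.Icc (0 : ℝ) s)) :
    ∀ t ∈ Set.Icc (0 : ℝ) T,
      w t ≤ A₀ * Real.exp (∫ s in (0 : ℝ)..t, c s) := by
  intro t ht
  have hE_cont := continuousOn_exp_primitive (ht.1.trans ht.2) hcint
  have hE_pos : 0 < Real.exp (∫ s in (0 : ℝ)..t, c s) := Real.exp_pos _
  have hlt : ∀ B, A₀ < B → w t < B * Real.exp (∫ s in (0 : ℝ)..t, c s) := fun B hB =>
    lt_on_Icc_of_lt_on_Ico_imp_lt hwcont (continuousOn_const.mul hE_cont)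
      (fun τ hτ => sup_gronwall_lt_of_lt_on_Ico hA₀ hwnonneg hcnonneg hcint hineq hB hτ) t ht
  rw [← div_le_iff₀ hE_pos]
  exact le_of_forall_gt_imp_ge_of_dense fun B hB => ((div_lt_iff₀ hE_pos).2 (hlt B hB)).le

/-- **Sup-Gronwall integral inequality (core of the proof of Theorem 3.1).** If a
continuous nonnegative `w` on `[0,T]` satisfies
`w(t) ≤ A₀ + ∫₀ᵗ c(s) · sup_{r∈[0,s]} w(r) ds` with `c` nonnegative and integrable, then
`w(t) ≤ A₀ · exp(∫₀ᵗ c)` on `[0,T]`. -/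
theorem sup_gronwall_integral
    (T : ℝ) (hT : 0 < T)
    (A₀ : ℝ) (hA₀ : 0 ≤ A₀)
    (w c : ℝ → ℝ)
    (hwcont : ContinuousOn w (Set.Icc (0 : ℝ) T))
    (hwnonneg : ∀ t ∈ Set.Icc (0 : ℝ) T, 0 ≤ w t)
    (hcnonneg : ∀ s ∈ Set.Icc (0 : ℝ) T, 0 ≤ c s)
    (hcint : IntegrableOn c (Set.Icc (0 : ℝ) T))
    (hineq : ∀ t ∈ Set.Icc (0 : ℝ) T,
      w t ≤ A₀ + ∫ s in (0 : ℝ)..t, c s * sSup (w '' Set.Icc (0 : ℝ) s)) :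
    ∀ t ∈ Set.Icc (0 : ℝ) T,
      w t ≤ A₀ * Real.exp (∫ s in (0 : ℝ)..t, c s) :=
  sup_gronwall_integral_general T A₀ hA₀ w c hwcont hwnonneg hcnonneg hcint hineq
end

section
/- Delayed weighted integral estimate (estimate (2.17) in the proof of Theorem 3.1, scalar form): Let τ̄ > 0, T > 0, ω > 0, K > 0. Let u : [−τ̄, T] → [0,∞) be continuous, let τ : [0,T] → ℝ be continuous with 0 ≤ τ(s) ≤ τ̄, and let k : [−τ̄, T] → ℝ be locally integrable with ∫_{t−τ̄}^{t} |k(s)| ds < K whenever [t−τ̄, t] ⊆ [−τ̄, T]. Then for every t ∈ [0, T]: ∫₀ᵗ e^{ω(s−τ(s))} |k(s)| u(s−τ(s)) ds ≤ K · max_{r ∈ [−τ̄, 0]} e^{ωr} u(r) + ∫₀ᵗ |k(s)| · ( max_{r ∈ [max(s−τ̄,0), s]} e^{ωr} u(r) ) ds. -/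
/-!
Split `[0, t]` at `c = min t τ̄`. For `s ≤ c` the delayed point `s - τ s` lies either in the
history interval `[-τ̄, 0]` or in the window `[max (s - τ̄) 0, s]`, so the integrand is at most
`|k s|` times the sum of the two maxima, and `∫₀ᶜ |k| ≤ ∫_{c-τ̄}^c |k| < K`. For `s > τ̄` the
delayed point always lies in the window. The window maximum is continuous in `s`, being a
maximum over a moving compact interval, so the right-hand side is integrable.
-/

open MeasureTheory intervalIntegral Set

section
variable {α : Type*} [ConditionallyCompleteLinearOrder α] [TopologicalSpace α] [OrderTopology α]

theorem continuous_sSup_image_uIcc {f : ℝ → α} (hf : Continuous f) {a b : ℝ → ℝ}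
    (ha : Continuous a) (hb : Continuous b) :
    Continuous fun s => sSup (f '' uIcc (a s) (b s)) := by
  -- reparametrise the moving interval over the fixed compact set `[0, 1]`
  simp_rw [← segment_eq_uIcc, segment_eq_image_lineMap, image_image,
    AffineMap.lineMap_apply_ring']
  exact isCompact_Icc.continuous_sSup (by fun_prop)

theorem continuousOn_sSup_image_Icc {f : ℝ → α} {c d : ℝ} (hf : ContinuousOn f (Icc c d))
    {a b : ℝ → ℝ} (ha : Continuous a) (hb : Continuous b) {S : Set ℝ}
    (hS : ∀ s ∈ S, a s ≤ b s ∧ Icc (a s) (b s) ⊆ Icc c d) :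
    ContinuousOn (fun s => sSup (f '' Icc (a s) (b s))) S := by
  intro s hs
  have hcd : c ≤ d := nonempty_Icc.1 ⟨a s, (hS s hs).2 (left_mem_Icc.2 (hS s hs).1)⟩
  -- `f ∘ projIcc` is a globally continuous function agreeing with `f` on every window
  have hg : Continuous fun x => f (projIcc c d hcd x) :=
    hf.comp_continuous (continuous_subtype_val.comp continuous_projIcc) fun x =>
      (projIcc c d hcd x).2
  refine ((continuous_sSup_image_uIcc hg ha hb).continuousOn.congr fun s' hs' => ?_) s hs
  rw [uIcc_of_le (hS s' hs').1]
  exact congrArg sSup <| image_congr fun x hx => by rw [projIcc_of_mem hcd ((hS s' hs').2 hx)]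

end

theorem integral_mul_le_of_le_add_of_le {w g m : ℝ → ℝ} {c t K A : ℝ} (hc : 0 ≤ c)
    (hct : c ≤ t) (hw : IntervalIntegrable w volume 0 t) (hw0 : ∀ s, 0 ≤ w s)
    (hwg : IntervalIntegrable (fun s => w s * g s) volume 0 t)
    (hwm : IntervalIntegrable (fun s => w s * m s) volume 0 t)
    (hA : 0 ≤ A) (hwK : ∫ s in 0..c, w s ≤ K)
    (hgc : ∀ s ∈ Icc 0 c, g s ≤ A + m s) (hgt : ∀ s ∈ Ioo c t, g s ≤ m s) :
    ∫ s in 0..t, w s * g s ≤ K * A + ∫ s in 0..t, w s * m s := by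
  have h0c : uIcc 0 c ⊆ uIcc 0 t := uIcc_subset_uIcc_left (mem_uIcc_of_le hc hct)
  have hct' : uIcc c t ⊆ uIcc 0 t := uIcc_subset_uIcc_right (mem_uIcc_of_le hc hct)
  rw [← integral_add_adjacent_intervals (hwg.mono_set h0c) (hwg.mono_set hct'),
    ← integral_add_adjacent_intervals (hwm.mono_set h0c) (hwm.mono_set hct')]
  have hinit : ∫ s in 0..c, w s * g s ≤ A * (∫ s in 0..c, w s) + ∫ s in 0..c, w s * m s := by
    rw [← intervalIntegral.integral_const_mul,
      ← integral_add ((hw.mono_set h0c).const_mul A) (hwm.mono_set h0c)]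
    refine integral_mono_on hc (hwg.mono_set h0c)
      (((hw.mono_set h0c).const_mul A).add (hwm.mono_set h0c)) fun s hs => ?_
    nlinarith [hw0 s, hgc s hs]
  have htail : ∫ s in c..t, w s * g s ≤ ∫ s in c..t, w s * m s :=
    integral_mono_on_of_le_Ioo hct (hwg.mono_set hct') (hwm.mono_set hct') fun s hs =>
      mul_le_mul_of_nonneg_left (hgt s hs) (hw0 s)
  have := mul_le_mul_of_nonneg_left hwK hA
  linarith

section
variable {φ : ℝ → ℝ} {a b h T s d : ℝ}

theorem sSup_image_Icc_nonneg (hφ : ContinuousOn φ (Icc a b)) (hφ0 : ∀ r ∈ Icc a b, 0 ≤ φ r)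
    (hab : a ≤ b) : 0 ≤ sSup (φ '' Icc a b) :=
  (hφ0 a ⟨le_rfl, hab⟩).trans (hφ.le_sSup_image_Icc ⟨le_rfl, hab⟩)

theorem window_subset_Icc (hs : s ∈ Icc 0 T) (hh : 0 ≤ h) :
    Icc (max (s - h) 0) s ⊆ Icc (-h) T :=
  Icc_subset_Icc (by linarith [le_max_right (s - h) 0]) hs.2

theorem le_sSup_window_of_delay (hφ : ContinuousOn φ (Icc (-h) T)) (hs : s ∈ Icc 0 T)
    (hd : d ∈ Icc 0 h) (hsd : 0 ≤ s - d) :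
    φ (s - d) ≤ sSup (φ '' Icc (max (s - h) 0) s) :=
  (hφ.mono (window_subset_Icc hs (hd.1.trans hd.2))).le_sSup_image_Icc
    ⟨max_le (by linarith [hd.2]) hsd, by linarith [hd.1]⟩

theorem le_sSup_history_add_sSup_window_of_delay (hφ : ContinuousOn φ (Icc (-h) T))
    (hφ0 : ∀ r ∈ Icc (-h) T, 0 ≤ φ r) (hs : s ∈ Icc 0 T) (hd : d ∈ Icc 0 h) :
    φ (s - d) ≤ sSup (φ '' Icc (-h) 0) + sSup (φ '' Icc (max (s - h) 0) s) := by
  have hh : 0 ≤ h := hd.1.trans hd.2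
  have hhist : Icc (-h) 0 ⊆ Icc (-h) T := Icc_subset_Icc le_rfl (hs.1.trans hs.2)
  have hwindow : Icc (max (s - h) 0) s ⊆ Icc (-h) T := window_subset_Icc hs hh
  have hhist0 := sSup_image_Icc_nonneg (hφ.mono hhist) (fun r hr => hφ0 r (hhist hr))
    (neg_nonpos.2 hh)
  have hwindow0 := sSup_image_Icc_nonneg (hφ.mono hwindow) (fun r hr => hφ0 r (hwindow hr))
    (max_le (by linarith) hs.1)
  rcases le_or_gt (s - d) 0 with hsd | hsd
  · linarith [(hφ.mono hhist).le_sSup_image_Icc (show s - d ∈ Icc (-h) 0 from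
      ⟨by linarith [hs.1, hd.2], hsd⟩)]
  · linarith [le_sSup_window_of_delay hφ hs hd hsd.le]

end

theorem integral_mul_delayed_le_sSup_history_add {φ w d : ℝ → ℝ} {h T K t : ℝ} (hh : 0 ≤ h)
    (hφ : ContinuousOn φ (Icc (-h) T)) (hφ0 : ∀ r ∈ Icc (-h) T, 0 ≤ φ r)
    (hd : ContinuousOn d (Icc 0 T)) (hdh : ∀ s ∈ Icc 0 T, d s ∈ Icc 0 h)
    (hw : IntegrableOn w (Icc (-h) T)) (hw0 : ∀ s, 0 ≤ w s)
    (hwK : ∀ t, 0 ≤ t → t ≤ T → ∫ s in (t - h)..t, w s ≤ K) (ht : t ∈ Icc 0 T) :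
    ∫ s in 0..t, w s * φ (s - d s) ≤
      K * sSup (φ '' Icc (-h) 0) + ∫ s in 0..t, w s * sSup (φ '' Icc (max (s - h) 0) s) := by
  obtain ⟨ht0, htT⟩ := ht
  set c := min t h
  have hc : c ∈ Icc 0 t := ⟨le_min ht0 hh, min_le_left t h⟩
  have hch : c ≤ h := min_le_right t h
  have hw_sub {a b : ℝ} (ha : -h ≤ a) (hab : a ≤ b) (hb : b ≤ T) :
      IntervalIntegrable w volume a b :=
    (intervalIntegrable_iff_integrableOn_Icc_of_le hab).2 (hw.mono_set (Icc_subset_Icc ha hb))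
  have h0t : uIcc 0 t ⊆ Icc 0 T := by rw [uIcc_of_le ht0]; exact Icc_subset_Icc le_rfl htT
  have hdelay : MapsTo (fun s => s - d s) (Icc 0 T) (Icc (-h) T) := fun s hs =>
    ⟨by linarith [hs.1, (hdh s hs).2], by linarith [hs.2, (hdh s hs).1]⟩
  have hwindow : ContinuousOn (fun s => sSup (φ '' Icc (max (s - h) 0) s)) (Icc 0 T) :=
    continuousOn_sSup_image_Icc hφ (by fun_prop) continuous_id' fun s hs =>
      ⟨max_le (by linarith [hs.1]) hs.1, window_subset_Icc hs hh⟩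
  have hw0t := hw_sub (by linarith) ht0 htT
  refine integral_mul_le_of_le_add_of_le hc.1 hc.2 hw0t hw0
    (hw0t.mul_continuousOn ((hφ.comp (continuousOn_id.sub hd) hdelay).mono h0t))
    (hw0t.mul_continuousOn (hwindow.mono h0t))
    (sSup_image_Icc_nonneg (hφ.mono (Icc_subset_Icc le_rfl (ht0.trans htT)))
      (fun r hr => hφ0 r ⟨hr.1, hr.2.trans (ht0.trans htT)⟩) (by linarith))
    ?_ (fun s hs => ?_) (fun s hs => ?_)
  · exact (integral_mono_interval (by linarith [hc.1]) hc.1 le_rfl (ae_of_all _ fun s => hw0 s)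
      (hw_sub (by linarith [hc.1]) (by linarith) (hc.2.trans htT))).trans
      (hwK c hc.1 (hc.2.trans htT))
  · have hsT : s ∈ Icc 0 T := ⟨hs.1, hs.2.trans (hc.2.trans htT)⟩
    exact le_sSup_history_add_sSup_window_of_delay hφ hφ0 hsT (hdh s hsT)
  · have hhs : h < s := (min_lt_iff.1 hs.1).resolve_left fun hts => (hs.2.trans hts).false
    have hsT : s ∈ Icc 0 T := ⟨hc.1.trans hs.1.le, hs.2.le.trans htT⟩
    exact le_sSup_window_of_delay hφ hsT (hdh s hsT) (by linarith [(hdh s hsT).2])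

theorem delayed_weighted_integral_estimate_general
    (τbar T ω K : ℝ) (hτbar : 0 < τbar)
    (u : ℝ → ℝ) (τ : ℝ → ℝ) (k : ℝ → ℝ)
    (hucont : ContinuousOn u (Set.Icc (-τbar) T))
    (hunonneg : ∀ r ∈ Set.Icc (-τbar) T, 0 ≤ u r)
    (hτcont : ContinuousOn τ (Set.Icc (0 : ℝ) T))
    (hτ : ∀ s ∈ Set.Icc (0 : ℝ) T, 0 ≤ τ s ∧ τ s ≤ τbar)
    (hkint : IntegrableOn k (Set.Icc (-τbar) T))
    (hkK : ∀ t : ℝ, 0 ≤ t → t ≤ T → ∫ s in (t - τbar)..t, |k s| < K) :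
    ∀ t ∈ Set.Icc (0 : ℝ) T,
      (∫ s in (0 : ℝ)..t, Real.exp (ω * (s - τ s)) * |k s| * u (s - τ s)) ≤
        K * sSup ((fun r => Real.exp (ω * r) * u r) '' Set.Icc (-τbar) (0 : ℝ)) +
        ∫ s in (0 : ℝ)..t,
          |k s| * sSup ((fun r => Real.exp (ω * r) * u r) '' Set.Icc (max (s - τbar) 0) s) := by
  intro t ht
  have hintegrand : (fun s => Real.exp (ω * (s - τ s)) * |k s| * u (s - τ s)) =
      fun s => |k s| * (Real.exp (ω * (s - τ s)) * u (s - τ s)) := by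
    funext s; ring
  rw [hintegrand]
  exact integral_mul_delayed_le_sSup_history_add hτbar.le (by fun_prop)
    (fun r hr => mul_nonneg (Real.exp_pos _).le (hunonneg r hr)) hτcont hτ hkint.abs
    (fun s => abs_nonneg (k s)) (fun t ht0 htT => (hkK t ht0 htT).le) ht

/-- **Delayed weighted integral estimate (estimate (2.17) in the proof of Theorem 3.1,
scalar form).** For a continuous nonnegative `u` on `[−τ̄, T]`, a continuous delay
`0 ≤ τ(s) ≤ τ̄`, and a locally integrable `k` whose absolute value integrates to less than
`K` on every subinterval of length `τ̄` contained in `[−τ̄, T]`, the weighted delayed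
integral is bounded by the history term plus a running-maximum term. -/
theorem delayed_weighted_integral_estimate
    (τbar T ω K : ℝ) (hτbar : 0 < τbar) (hT : 0 < T) (hω : 0 < ω) (hK : 0 < K)
    (u : ℝ → ℝ) (τ : ℝ → ℝ) (k : ℝ → ℝ)
    (hucont : ContinuousOn u (Set.Icc (-τbar) T))
    (hunonneg : ∀ r ∈ Set.Icc (-τbar) T, 0 ≤ u r)
    (hτcont : ContinuousOn τ (Set.Icc (0 : ℝ) T))
    (hτ : ∀ s ∈ Set.Icc (0 : ℝ) T, 0 ≤ τ s ∧ τ s ≤ τbar)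
    (hkint : IntegrableOn k (Set.Icc (-τbar) T))
    (hkK : ∀ t : ℝ, 0 ≤ t → t ≤ T → ∫ s in (t - τbar)..t, |k s| < K) :
    ∀ t ∈ Set.Icc (0 : ℝ) T,
      (∫ s in (0 : ℝ)..t, Real.exp (ω * (s - τ s)) * |k s| * u (s - τ s)) ≤
        K * sSup ((fun r => Real.exp (ω * r) * u r) '' Set.Icc (-τbar) (0 : ℝ)) +
        ∫ s in (0 : ℝ)..t,
          |k s| * sSup ((fun r => Real.exp (ω * r) * u r) '' Set.Icc (max (s - τbar) 0) s) :=
  delayed_weighted_integral_estimate_general τbar T ω K hτbar u τ k hucont hunonneg hτcont hτ hkint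
    hkK
end
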